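/- arXiv:1912.05251 — 8 statements merged into one kernel-verified Lean document; each statement's English description precedes it below -/
import Mathlib

section
/- Let m ≥ 1, let F be a finite family of bottomless rectangles in general position, and let p be a point covered by at least (m−1)⁴ + 1 rectangles of F. Then there exist m rectangles of F, all covering p, that form increasing m-steps, decreasing m-steps, an m-tower, or an m-nested set. -/
/-- A bottomless rectangle with parameters `(l, r, t)`, `l ≤ r`. -/
structure BRect where
  l : ℝ
  r : ℝ
  t : ℝ
  hlr : l ≤ r

/-- A point `(x, y)` is covered by `(l, r, t)` iff `l ≤ x ≤ r` and `y ≤ t`. -/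
def BRect.covers (R : BRect) (p : ℝ × ℝ) : Prop :=
  R.l ≤ p.1 ∧ p.1 ≤ R.r ∧ p.2 ≤ R.t

/-- A finite family is in general position: pairwise distinct left, right and top
coordinates. -/
def GenPos (F : Finset BRect) : Prop :=
  ∀ R ∈ F, ∀ R' ∈ F, R ≠ R' → R.l ≠ R'.l ∧ R.r ≠ R'.r ∧ R.t ≠ R'.t

/-- Increasing `m`-steps: `l`, `r`, `t` all strictly increasing. -/
def IncSteps {m : ℕ} (R : Fin m → BRect) : Prop :=
  StrictMono (fun i => (R i).l) ∧ StrictMono (fun i => (R i).r) ∧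
    StrictMono (fun i => (R i).t)

/-- Decreasing `m`-steps: `l`, `r` strictly increasing, `t` strictly decreasing. -/
def DecSteps {m : ℕ} (R : Fin m → BRect) : Prop :=
  StrictMono (fun i => (R i).l) ∧ StrictMono (fun i => (R i).r) ∧
    StrictAnti (fun i => (R i).t)

/-- An `m`-tower: `l` strictly increasing, `r` strictly decreasing, `t` strictly
increasing. -/
def TowerCfg {m : ℕ} (R : Fin m → BRect) : Prop :=
  StrictMono (fun i => (R i).l) ∧ StrictAnti (fun i => (R i).r) ∧
    StrictMono (fun i => (R i).t)

/-- An `m`-nested set: `l` strictly increasing, `r` strictly decreasing, `t` strictly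
decreasing. -/
def NestedCfg {m : ℕ} (R : Fin m → BRect) : Prop :=
  StrictMono (fun i => (R i).l) ∧ StrictAnti (fun i => (R i).r) ∧
    StrictAnti (fun i => (R i).t)

/-!
Sort the rectangles covering `p` by their left coordinate. By Erdős–Szekeres, among
`(m-1)⁴ + 1` of them some `(m-1)² + 1` have right coordinates monotone in that order, and
among those some `m` also have monotone top coordinates; the two monotonicity directions
give the four configurations. Erdős–Szekeres itself is the pigeonhole argument on the pairs
(longest increasing, longest decreasing run ending at `i`), which are pairwise distinct.
-/

open Finset Function

theorem strictMono_or_strictAnti_comp {α γ δ : Type*} [Preorder α] [Preorder γ] [Preorder δ]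
    {u : γ → α} {g : δ → γ} (hu : StrictMono u ∨ StrictAnti u) (hg : StrictMono g) :
    StrictMono (u ∘ g) ∨ StrictAnti (u ∘ g) :=
  hu.imp (·.comp hg) (·.comp_strictMono hg)

section ErdosSzekeres

variable {ι α β : Type*} [LinearOrder ι] [Fintype ι] [LinearOrder α] [LinearOrder β]

open Classical in
noncomputable def increasingRunsEndingAt (f : ι → α) (i : ι) : Finset (Finset ι) :=
  (univ : Finset (Finset ι)).filter fun t : Finset ι =>
    IsGreatest (t : Set ι) i ∧ StrictMonoOn f t

noncomputable def longestIncreasingEndingAt (f : ι → α) (i : ι) : ℕ :=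
  (increasingRunsEndingAt f i).sup card

variable (f : ι → α)

theorem mem_increasingRunsEndingAt {i : ι} {t : Finset ι} :
    t ∈ increasingRunsEndingAt f i ↔ IsGreatest (t : Set ι) i ∧ StrictMonoOn f t := by
  simp [increasingRunsEndingAt]

theorem singleton_mem_increasingRunsEndingAt (i : ι) : {i} ∈ increasingRunsEndingAt f i := by
  simp [mem_increasingRunsEndingAt, isGreatest_singleton]

theorem one_le_longestIncreasingEndingAt (i : ι) : 1 ≤ longestIncreasingEndingAt f i :=
  le_sup (f := card) (singleton_mem_increasingRunsEndingAt f i)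

theorem exists_card_eq_longestIncreasingEndingAt (i : ι) :
    ∃ t ∈ increasingRunsEndingAt f i, t.card = longestIncreasingEndingAt f i := by
  obtain ⟨t, ht, hsup⟩ :=
    exists_mem_eq_sup _ ⟨_, singleton_mem_increasingRunsEndingAt f i⟩ card
  exact ⟨t, ht, hsup.symm⟩

theorem insert_mem_increasingRunsEndingAt {i j : ι} {t : Finset ι}
    (ht : t ∈ increasingRunsEndingAt f i) (hij : i < j) (hf : f i < f j) :
    insert j t ∈ increasingRunsEndingAt f j := by
  obtain ⟨hi, hmono⟩ := (mem_increasingRunsEndingAt f).1 ht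
  have hle : ∀ x ∈ (t : Set ι), x ≤ j := fun x hx => (hi.2 hx).trans hij.le
  rw [mem_increasingRunsEndingAt, coe_insert]
  refine ⟨⟨Set.mem_insert j _, Set.insert_subset_iff.2 ⟨le_rfl, hle⟩⟩, ?_⟩
  refine (strictMonoOn_insert_iff_of_forall_le hle).2 ⟨fun x hx _ => ?_, hmono⟩
  exact (hmono.monotoneOn hx hi.1 (hi.2 hx)).trans_lt hf

theorem longestIncreasingEndingAt_lt {i j : ι} (hij : i < j) (hf : f i < f j) :
    longestIncreasingEndingAt f i < longestIncreasingEndingAt f j := by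
  obtain ⟨t, ht, hcard⟩ := exists_card_eq_longestIncreasingEndingAt f i
  have hj : j ∉ t := fun hj => (((mem_increasingRunsEndingAt f).1 ht).1.2 hj).not_gt hij
  calc longestIncreasingEndingAt f i < (insert j t).card := by
        rw [card_insert_of_notMem hj, hcard]; omega
    _ ≤ longestIncreasingEndingAt f j :=
        le_sup (f := card) (insert_mem_increasingRunsEndingAt f ht hij hf)

theorem exists_card_eq_strictMonoOn_of_le_longestIncreasingEndingAt {n : ℕ} {i : ι}
    (h : n ≤ longestIncreasingEndingAt f i) :
    ∃ t : Finset ι, t.card = n ∧ StrictMonoOn f t := by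
  obtain ⟨t, ht, hcard⟩ := exists_card_eq_longestIncreasingEndingAt f i
  obtain ⟨u, hut, hu⟩ := exists_subset_card_eq (hcard ▸ h)
  exact ⟨u, hu, ((mem_increasingRunsEndingAt f).1 ht).2.mono (coe_subset.2 hut)⟩

theorem injective_longestIncreasingEndingAt_prod (hf : Injective f) :
    Injective fun i => (longestIncreasingEndingAt f i,
      longestIncreasingEndingAt (OrderDual.toDual ∘ f) i) := by
  intro i j hij
  by_contra hne
  wlog hlt : i < j generalizing i j
  · exact this hij.symm (Ne.symm hne) ((Ne.symm hne).lt_of_le (not_lt.1 hlt))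
  rcases (hf.ne hne).lt_or_gt with h | h
  · exact (longestIncreasingEndingAt_lt f hlt h).ne (congrArg Prod.fst hij)
  · exact (longestIncreasingEndingAt_lt _ hlt h).ne (congrArg Prod.snd hij)

theorem exists_card_strictMonoOn_or_strictAntiOn (hf : Injective f) {r s : ℕ}
    (h : r * s < Fintype.card ι) :
    (∃ t : Finset ι, t.card = r + 1 ∧ StrictMonoOn f t) ∨
      ∃ t : Finset ι, t.card = s + 1 ∧ StrictAntiOn f t := by
  by_contra! hne
  obtain ⟨hinc, hdec⟩ := hne
  have hmem (i : ι) : (longestIncreasingEndingAt f i,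
      longestIncreasingEndingAt (OrderDual.toDual ∘ f) i) ∈ Icc 1 r ×ˢ Icc 1 s := by
    simp only [mem_product, mem_Icc, one_le_longestIncreasingEndingAt, true_and]
    constructor
    · by_contra! hi
      obtain ⟨t, ht, hmono⟩ := exists_card_eq_strictMonoOn_of_le_longestIncreasingEndingAt f hi
      exact hinc t ht hmono
    · by_contra! hi
      obtain ⟨t, ht, hmono⟩ := exists_card_eq_strictMonoOn_of_le_longestIncreasingEndingAt _ hi
      exact hdec t ht (strictMonoOn_toDual_comp_iff.1 hmono)
  have hcard := card_le_card_of_injOn (s := univ) _ (fun i _ => hmem i)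
    (injective_longestIncreasingEndingAt_prod f hf).injOn
  simp only [card_univ, card_product, Nat.card_Icc, add_tsub_cancel_right] at hcard
  omega

theorem exists_orderEmbedding_strictMono_or_strictAnti (hf : Injective f) {k : ℕ}
    (h : k * k < Fintype.card ι) :
    ∃ g : Fin (k + 1) ↪o ι, StrictMono (f ∘ g) ∨ StrictAnti (f ∘ g) := by
  obtain ⟨t, ht, hmono⟩ | ⟨t, ht, hanti⟩ := exists_card_strictMonoOn_or_strictAntiOn f hf h
  · exact ⟨t.orderEmbOfFin ht, Or.inl fun a b hab => hmono (t.orderEmbOfFin_mem ht a)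
      (t.orderEmbOfFin_mem ht b) ((t.orderEmbOfFin ht).strictMono hab)⟩
  · exact ⟨t.orderEmbOfFin ht, Or.inr fun a b hab => hanti (t.orderEmbOfFin_mem ht a)
      (t.orderEmbOfFin_mem ht b) ((t.orderEmbOfFin ht).strictMono hab)⟩

theorem exists_orderEmbedding_strictMono_or_strictAnti_pair (f' : ι → β) (hf : Injective f)
    (hf' : Injective f') {k : ℕ} (h : k ^ 2 * k ^ 2 < Fintype.card ι) :
    ∃ g : Fin (k + 1) ↪o ι, (StrictMono (f ∘ g) ∨ StrictAnti (f ∘ g)) ∧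
      (StrictMono (f' ∘ g) ∨ StrictAnti (f' ∘ g)) := by
  obtain ⟨g₁, hg₁⟩ := exists_orderEmbedding_strictMono_or_strictAnti f hf h
  obtain ⟨g₂, hg₂⟩ := exists_orderEmbedding_strictMono_or_strictAnti (f' ∘ g₁)
    (hf'.comp g₁.injective) (k := k) (by simp [sq])
  exact ⟨g₂.trans g₁, (strictMono_or_strictAnti_comp hg₁ g₂.strictMono :), hg₂⟩

end ErdosSzekeres

theorem Finset.exists_strictMono_comp_of_injOn {α γ : Type*} [LinearOrder α] (s : Finset γ)
    {u : γ → α} (hu : Set.InjOn u s) :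
    ∃ σ : Fin s.card → γ, (∀ i, σ i ∈ s) ∧ StrictMono (u ∘ σ) := by
  have hcard : (s.image u).card = s.card := card_image_of_injOn hu
  have hmem (i : Fin s.card) : ∃ x ∈ s, u x = (s.image u).orderEmbOfFin hcard i :=
    mem_image.1 ((s.image u).orderEmbOfFin_mem hcard i)
  choose σ hσs hσu using hmem
  refine ⟨σ, hσs, fun a b hab => ?_⟩
  simpa only [comp_apply, hσu] using ((s.image u).orderEmbOfFin hcard).strictMono hab

theorem GenPos.injOn_l {F : Finset BRect} (hF : GenPos F) : Set.InjOn BRect.l F :=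
  fun R hR R' hR' h => not_not.1 fun hne => (hF R hR R' hR' hne).1 h

theorem GenPos.injOn_r {F : Finset BRect} (hF : GenPos F) : Set.InjOn BRect.r F :=
  fun R hR R' hR' h => not_not.1 fun hne => (hF R hR R' hR' hne).2.1 h

theorem GenPos.injOn_t {F : Finset BRect} (hF : GenPos F) : Set.InjOn BRect.t F :=
  fun R hR R' hR' h => not_not.1 fun hne => (hF R hR R' hR' hne).2.2 h

theorem incSteps_or_decSteps_or_towerCfg_or_nestedCfg {m : ℕ} {R : Fin m → BRect}
    (hl : StrictMono (BRect.l ∘ R))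
    (hr : StrictMono (BRect.r ∘ R) ∨ StrictAnti (BRect.r ∘ R))
    (ht : StrictMono (BRect.t ∘ R) ∨ StrictAnti (BRect.t ∘ R)) :
    IncSteps R ∨ DecSteps R ∨ TowerCfg R ∨ NestedCfg R := by
  rcases hr with hr | hr <;> rcases ht with ht | ht
  exacts [Or.inl ⟨hl, hr, ht⟩, Or.inr (Or.inl ⟨hl, hr, ht⟩),
    Or.inr (Or.inr (Or.inl ⟨hl, hr, ht⟩)), Or.inr (Or.inr (Or.inr ⟨hl, hr, ht⟩))]

theorem erdos_szekeres_configs_general (m : ℕ) (F : Finset BRect) (hF : GenPos F)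
    (p : ℝ × ℝ)
    (hp : ∃ G ⊆ F, (m - 1) ^ 4 + 1 ≤ G.card ∧ ∀ R ∈ G, R.covers p) :
    ∃ R : Fin m → BRect,
      (∀ i, R i ∈ F) ∧ (∀ i, (R i).covers p) ∧
      (IncSteps R ∨ DecSteps R ∨ TowerCfg R ∨ NestedCfg R) := by
  obtain ⟨G, hGF, hcard, hcov⟩ := hp
  obtain ⟨σ, hσG, hσl⟩ := G.exists_strictMono_comp_of_injOn (hF.injOn_l.mono hGF)
  have hσF (i : Fin G.card) : σ i ∈ F := hGF (hσG i)
  have hσ : Injective σ := hσl.injective.of_comp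
  have hrange : Set.range σ ⊆ F := Set.range_subset_iff.2 hσF
  obtain ⟨g, hr, ht⟩ := exists_orderEmbedding_strictMono_or_strictAnti_pair (k := m - 1)
    (BRect.r ∘ σ) (BRect.t ∘ σ) ((hF.injOn_r.injective_iff _ hrange).2 hσ)
    ((hF.injOn_t.injective_iff _ hrange).2 hσ) (by simpa [← pow_add] using hcard)
  let e : Fin m ↪o Fin (m - 1 + 1) := Fin.castLEOrderEmb (by omega)
  refine ⟨σ ∘ g ∘ e, fun i => hσF _, fun i => hcov _ (hσG _), ?_⟩
  exact incSteps_or_decSteps_or_towerCfg_or_nestedCfg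
    (hσl.comp (g.strictMono.comp e.strictMono))
    (strictMono_or_strictAnti_comp hr e.strictMono :)
    (strictMono_or_strictAnti_comp ht e.strictMono :)

/-- Any point covered by `(m-1)⁴ + 1` bottomless rectangles in general position is
covered by `m` of them forming increasing steps, decreasing steps, a tower, or a
nested set. -/
theorem erdos_szekeres_configs (m : ℕ) (hm : 1 ≤ m) (F : Finset BRect) (hF : GenPos F)
    (p : ℝ × ℝ)
    (hp : ∃ G ⊆ F, (m - 1) ^ 4 + 1 ≤ G.card ∧ ∀ R ∈ G, R.covers p) :
    ∃ R : Fin m → BRect,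
      (∀ i, R i ∈ F) ∧ (∀ i, (R i).covers p) ∧
      (IncSteps R ∨ DecSteps R ∨ TowerCfg R ∨ NestedCfg R) :=
  erdos_szekeres_configs_general m F hF p hp
end

section
/- Let k ≥ 1 and let F be a finite family of bottomless rectangles in general position. Then for each of the four configuration types T ∈ {increasing k-steps, decreasing k-steps, k-tower, k-nested set} there exists a colouring c : F → {1, …, k} such that for every point p ∈ ℝ²: if some k rectangles of F, all covering p, form a configuration of type T, then p is covered by all k colours. -/
/-- The colouring `c` is polychromatic for the configuration type `cfg`: any point
covered by `k` members of `F` forming a `cfg`-configuration is covered by all `k`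
colours. -/
def GoodColouring (k : ℕ) (F : Finset BRect) (cfg : (Fin k → BRect) → Prop)
    (c : BRect → Fin k) : Prop :=
  ∀ p : ℝ × ℝ,
    (∃ R : Fin k → BRect, (∀ i, R i ∈ F) ∧ (∀ i, (R i).covers p) ∧ cfg R) →
    ∀ i : Fin k, ∃ R' ∈ F, R'.covers p ∧ c R' = i

/-!
After a choice of signs, the rectangles covering a point `(x, y)` are exactly those whose
coordinate vector lies in an octant `{a ≤ u} ∩ {q ≤ f}` of `ℝ × (ℝ × ℝ)`, where `a` is one of
`l, -r, -t` and `f` pairs the other two; the signs can be chosen so that each of the four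
configurations is a chain for the componentwise order on `f`. So it suffices to `k`-colour a
finite set of points so that every octant containing a `k`-chain sees all colours.

Induct on the set: remove an `f`-minimal point `z` and colour the rest. The sets
`{x ≠ z : a x ≤ u, f z ≤ f x}` are nested in `u`, so some colour `γ` is missing from all of
them that miss a colour; give `z` the colour `γ`. A chain through `z` has its other points in
such a set, which either already has all colours or gains the new colour `γ` from `z`.
-/

variable {α L P κ : Type*} [LinearOrder L] [Preorder P]

open Classical in
noncomputable def octant (F : Finset α) (a : α → L) (f : α → P) (u : L) (p : P) : Finset α :=
  F.filter fun x => a x ≤ u ∧ p ≤ f x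

@[simp]
theorem mem_octant {F : Finset α} {a : α → L} {f : α → P} {u : L} {p : P} {x : α} :
    x ∈ octant F a f u p ↔ x ∈ F ∧ a x ≤ u ∧ p ≤ f x := by
  simp [octant]

theorem octant_mono {F G : Finset α} (a : α → L) (f : α → P) (u : L) {p q : P} (hFG : F ⊆ G)
    (hpq : p ≤ q) : octant F a f u q ⊆ octant G a f u p := fun x hx => by
  rw [mem_octant] at hx ⊢
  exact ⟨hFG hx.1, hx.2.1, hpq.trans hx.2.2⟩

theorem octant_subset (F : Finset α) (a : α → L) (f : α → P) (u : L) (p : P) :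
    octant F a f u p ⊆ F := fun _ hx =>
  (mem_octant.1 hx).1

theorem Finset.exists_forall_notMem_image_filter_le [Fintype κ] [Nonempty κ] [DecidableEq κ]
    (A : Finset α) (a : α → L) (col : α → κ) :
    ∃ γ : κ, ∀ u, (A.filter (a · ≤ u)).image col ≠ univ →
      γ ∉ (A.filter (a · ≤ u)).image col := by
  have hmono {u v : L} (huv : u ≤ v) : A.filter (a · ≤ u) ⊆ A.filter (a · ≤ v) :=
    fun x hx => mem_filter.2 ⟨(mem_filter.1 hx).1, (mem_filter.1 hx).2.trans huv⟩
  -- the union `M` of the sublevel sets missing a colour lies in the largest of them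
  set M := A.filter fun x => (A.filter (a · ≤ a x)).image col ≠ univ
  have hM : M.image col ≠ univ := by
    rcases M.eq_empty_or_nonempty with hM | hM
    · simpa [hM] using univ_nonempty.ne_empty.symm
    obtain ⟨x, hxM, hx⟩ := M.exists_max_image a hM
    have hMx : M ⊆ A.filter (a · ≤ a x) :=
      fun y hy => mem_filter.2 ⟨(mem_filter.1 hy).1, hx y hy⟩
    exact fun h => (mem_filter.1 hxM).2 (univ_subset_iff.1 (h ▸ image_subset_image hMx))
  have hMu (u : L) (hu : (A.filter (a · ≤ u)).image col ≠ univ) : A.filter (a · ≤ u) ⊆ M :=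
    fun x hx => mem_filter.2 ⟨(mem_filter.1 hx).1, fun h =>
      hu (univ_subset_iff.1 (h ▸ image_subset_image (hmono (mem_filter.1 hx).2)))⟩
  obtain ⟨γ, hγ⟩ := not_forall.1 (mt eq_univ_of_forall hM)
  exact ⟨γ, fun u hu hγu => hγ (image_subset_image (hMu u hu) hγu)⟩

theorem erase_subset_octant_erase [DecidableEq α] {F s : Finset α} {a : α → L} {f : α → P}
    {u : L} {p : P} (hs : s ⊆ octant F a f u p) (z : α) {q : P} (hq : ∀ x ∈ s, x ≠ z → q ≤ f x) :
    s.erase z ⊆ octant (F.erase z) a f u q := fun x hx => by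
  obtain ⟨hxz, hxs⟩ := Finset.mem_erase.1 hx
  obtain ⟨hxF, hxa, -⟩ := mem_octant.1 (hs hxs)
  exact mem_octant.2 ⟨Finset.mem_erase.2 ⟨hxz, hxF⟩, hxa, hq x hxs hxz⟩

theorem exists_colouring_card_le_card_image_octant [Fintype κ] [Nonempty κ] [DecidableEq κ]
    (F : Finset α) (a : α → L) (f : α → P) :
    ∃ col : α → κ, ∀ u p (s : Finset α), s ⊆ octant F a f u p → IsChain (· ≤ ·) (f '' s) →
      s.card ≤ Fintype.card κ → s.card ≤ ((octant F a f u p).image col).card := by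
  classical
  induction F using Finset.strongInduction with
  | H F ih =>
  rcases F.eq_empty_or_nonempty with rfl | hF
  · refine ⟨fun _ => Classical.arbitrary κ, fun u p s hs _ _ => ?_⟩
    simp [Finset.subset_empty.1 (hs.trans (octant_subset ..))]
  obtain ⟨z, hzF, hzmin⟩ := F.exists_minimalFor f hF
  obtain ⟨col', hcol'⟩ := ih (F.erase z) (F.erase_ssubset hzF)
  obtain ⟨γ, hγ⟩ := ((F.erase z).filter (f z ≤ f ·)).exists_forall_notMem_image_filter_le a col'
  set col := Function.update col' z γ
  have hcol : ∀ u p,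
      (octant (F.erase z) a f u p).image col = (octant (F.erase z) a f u p).image col' :=
    fun u p => Finset.image_congr fun x hx =>
      Function.update_of_ne (Finset.ne_of_mem_erase (octant_subset _ _ _ _ _ hx)) _ _
  refine ⟨col, fun u p s hs hchain hcard => ?_⟩
  by_cases hzs : z ∈ s
  · have hzle : ∀ x ∈ s, f z ≤ f x := fun x hx =>
      (hchain.total (Set.mem_image_of_mem f hzs) (Set.mem_image_of_mem f hx)).elim id
        (hzmin (mem_octant.1 (hs hx)).1)
    set T := octant (F.erase z) a f u (f z)
    have hTcard : s.card - 1 ≤ (T.image col').card := by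
      rw [← Finset.card_erase_of_mem hzs]
      exact hcol' u (f z) _ (erase_subset_octant_erase hs z fun x hx _ => hzle x hx)
        (hchain.mono (Set.image_mono (by simp))) ((Finset.card_erase_le).trans hcard)
    have hTimage : T.image col' ⊆ (octant F a f u p).image col :=
      hcol u (f z) ▸ Finset.image_subset_image
        (octant_mono a f u (F.erase_subset z) (mem_octant.1 (hs hzs)).2.2)
    by_cases hfull : T.image col' = Finset.univ
    · rw [hfull, Finset.univ_subset_iff] at hTimage
      simpa [hTimage] using hcard
    -- `T` is a sublevel set of `a` on the points of `F.erase z` above `z`, so `γ` is new in it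
    have hT : T = ((F.erase z).filter (f z ≤ f ·)).filter (a · ≤ u) := by
      ext x; simp only [T, mem_octant, Finset.mem_filter]; tauto
    have hγT : γ ∉ T.image col' := hT ▸ hγ u (hT ▸ hfull)
    calc s.card ≤ (insert γ (T.image col')).card := by
          rw [Finset.card_insert_of_notMem hγT]; omega
      _ ≤ _ := Finset.card_le_card (Finset.insert_subset
          (Function.update_self z γ col' ▸ Finset.mem_image_of_mem col (hs hzs)) hTimage)
  · calc s.card = (s.erase z).card := by rw [Finset.erase_eq_of_notMem hzs]
      _ ≤ ((octant (F.erase z) a f u p).image col).card := hcol u p ▸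
          hcol' u p _ (erase_subset_octant_erase hs z fun x hx _ => (mem_octant.1 (hs hx)).2.2)
            (hchain.mono (Set.image_mono (by simp))) ((Finset.card_erase_le).trans hcard)
      _ ≤ _ := Finset.card_le_card (Finset.image_subset_image
          (octant_mono a f u (F.erase_subset z) le_rfl))

theorem exists_colouring_forall_mem_image_octant [Fintype κ] [Nonempty κ]
    (F : Finset α) (a : α → L) (f : α → P) :
    ∃ col : α → κ, ∀ u p (s : Finset α), s ⊆ octant F a f u p → IsChain (· ≤ ·) (f '' s) →
      s.card = Fintype.card κ → ∀ i, ∃ x ∈ octant F a f u p, col x = i := by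
  classical
  obtain ⟨col, hcol⟩ := exists_colouring_card_le_card_image_octant (κ := κ) F a f
  refine ⟨col, fun u p s hs hchain hcard i => Finset.mem_image.1 ?_⟩
  rw [Finset.eq_univ_of_card ((octant F a f u p).image col)
    (le_antisymm (Finset.card_le_univ _) (hcard ▸ hcol u p s hs hchain hcard.le))]
  exact Finset.mem_univ i

theorem exists_goodColouring_of_isChain (k : ℕ) (hk : 1 ≤ k) (F : Finset BRect)
    (cfg : (Fin k → BRect) → Prop) (a : BRect → ℝ) (f : BRect → ℝ × ℝ) (u : ℝ × ℝ → ℝ)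
    (q : ℝ × ℝ → ℝ × ℝ) (hcovers : ∀ R p, R.covers p ↔ a R ≤ u p ∧ q p ≤ f R)
    (hcfg : ∀ R, cfg R → Function.Injective R ∧ IsChain (· ≤ ·) (Set.range (f ∘ R))) :
    ∃ c : BRect → Fin k, GoodColouring k F cfg c := by
  classical
  have : Nonempty (Fin k) := ⟨⟨0, hk⟩⟩
  obtain ⟨col, hcol⟩ := exists_colouring_forall_mem_image_octant (κ := Fin k) F a f
  refine ⟨col, fun p ⟨R, hRF, hRp, hR⟩ i => ?_⟩
  obtain ⟨hinj, hchain⟩ := hcfg R hR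
  have hsub : Finset.univ.image R ⊆ octant F a f (u p) (q p) :=
    Finset.image_subset_iff.2 fun j _ => mem_octant.2 ⟨hRF j, (hcovers _ _).1 (hRp j)⟩
  obtain ⟨x, hx, rfl⟩ := hcol (u p) (q p) _ hsub (by simpa [Set.range_comp] using hchain)
    (by simp [Finset.card_image_of_injective _ hinj]) i
  obtain ⟨hxF, hxa, hxf⟩ := mem_octant.1 hx
  exact ⟨x, hxF, (hcovers x p).2 ⟨hxa, hxf⟩, rfl⟩

theorem configs_polychromatic_general (k : ℕ) (hk : 1 ≤ k) (F : Finset BRect) :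
    (∃ c : BRect → Fin k, GoodColouring k F IncSteps c) ∧
    (∃ c : BRect → Fin k, GoodColouring k F DecSteps c) ∧
    (∃ c : BRect → Fin k, GoodColouring k F TowerCfg c) ∧
    (∃ c : BRect → Fin k, GoodColouring k F NestedCfg c) := by
  have inj {R : Fin k → BRect} (hl : StrictMono fun i => (R i).l) : Function.Injective R :=
    hl.injective.of_comp
  refine ⟨?_, ?_, ?_, ?_⟩
  · exact exists_goodColouring_of_isChain k hk F _ BRect.l (fun R => (R.r, R.t)) Prod.fst id
      (fun R p => by simp only [BRect.covers, id, Prod.le_def])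
      fun R ⟨hl, hr, ht⟩ => ⟨inj hl, (hr.monotone.prodMk ht.monotone).isChain_range⟩
  · exact exists_goodColouring_of_isChain k hk F _ (fun R => -R.r) (fun R => (-R.l, R.t))
      (fun p => -p.1) (fun p => (-p.1, p.2))
      (fun R p => by simp only [BRect.covers, Prod.mk_le_mk, neg_le_neg_iff]; tauto)
      fun R ⟨hl, _, ht⟩ => ⟨inj hl, Antitone.isChain_range fun i j hij =>
        ⟨neg_le_neg (hl.monotone hij), ht.antitone hij⟩⟩
  · exact exists_goodColouring_of_isChain k hk F _ (fun R => -R.t) (fun R => (R.r, -R.l))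
      (fun p => -p.2) (fun p => (p.1, -p.1))
      (fun R p => by simp only [BRect.covers, Prod.mk_le_mk, neg_le_neg_iff]; tauto)
      fun R ⟨hl, hr, _⟩ => ⟨inj hl, Antitone.isChain_range fun i j hij =>
        ⟨hr.antitone hij, neg_le_neg (hl.monotone hij)⟩⟩
  · exact exists_goodColouring_of_isChain k hk F _ BRect.l (fun R => (R.r, R.t)) Prod.fst id
      (fun R p => by simp only [BRect.covers, id, Prod.le_def])
      fun R ⟨hl, hr, ht⟩ => ⟨inj hl, Antitone.isChain_range fun i j hij =>
        ⟨hr.antitone hij, ht.antitone hij⟩⟩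

/-- For each of the four Erdős–Szekeres configuration types, `m_k^* = k`: there is a
`k`-colouring such that any point covered by a `k`-fold configuration of that type gets
all `k` colours. -/
theorem configs_polychromatic (k : ℕ) (hk : 1 ≤ k) (F : Finset BRect) (hF : GenPos F) :
    (∃ c : BRect → Fin k, GoodColouring k F IncSteps c) ∧
    (∃ c : BRect → Fin k, GoodColouring k F DecSteps c) ∧
    (∃ c : BRect → Fin k, GoodColouring k F TowerCfg c) ∧
    (∃ c : BRect → Fin k, GoodColouring k F NestedCfg c) :=
  configs_polychromatic_general k hk F
end

section
/- Let k ≥ 1 and let F be a finite family of bottomless rectangles in general position. Then: (a) there exists a colouring c : F → {1, …, k} such that every point p covered by k rectangles of F forming a k-tower, as well as every point p covered by k rectangles of F forming a k-nested set, is covered by all k colours; (b) the same holds with 'k-tower' replaced by 'increasing k-steps'; (c) the same holds with 'k-tower' replaced by 'decreasing k-steps'. -/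
/-!
All three colourings come from one lemma about two orderings `f`, `g` and a height `h` on
a finite family, where `U` precedes `W` if `f U < f W` and `g W < g U`. Colour the family
in increasing order of `f`. When `W` is added, the colour sets of its predecessors of height
at least `s` shrink as `s` grows, so they form a chain under inclusion and some colour avoids
every one of them that does not already use all `k` colours; `W` receives such a colour.
By induction along a chain `W₀ ≺ ⋯ ≺ Wₘ` of height at least `s`, the rectangle `Wₘ`
together with its predecessors of height at least `s` then carry `m + 1` colours.

For a point `p` covered by a `k`-configuration, its last rectangle and all of its
predecessors above the relevant level cover `p`. The three pairs use
`(f, g, h) = (l, r, t)`, `(-r, t, -l)` and `(l, t, r)`.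
-/

open Finset

theorem Antitone.exists_notMem_of_ne_univ {X δ : Type*} [Fintype X] [Nonempty X]
    [LinearOrder δ] {S : δ → Finset X} (hS : Antitone S) :
    ∃ x, ∀ s, S s ≠ univ → x ∉ S s := by
  by_contra! H
  choose t ht hx using H
  obtain ⟨x₀, hx₀⟩ := Finite.exists_min t
  exact ht x₀ (eq_univ_of_forall fun x => hS (hx₀ x) (hx x))

section Chains

variable {α β γ δ : Type*} [LinearOrder β] [LinearOrder γ] [LinearOrder δ]
  (f : α → β) (g : α → γ) (h : α → δ)

def predsAbove (F : Finset α) (W : α) (s : δ) : Finset α :=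
  F.filter fun U => f U < f W ∧ g W < g U ∧ s ≤ h U

/-- A chain of `m + 1` (not `m`) elements of height at least `s`, ending at `W`. -/
inductive ChainAbove (F : Finset α) (s : δ) : ℕ → α → Prop
  | single {W : α} : W ∈ F → s ≤ h W → ChainAbove F s 0 W
  | cons {m : ℕ} {V W : α} : ChainAbove F s m V → W ∈ F → s ≤ h W → f V < f W → g W < g V →
      ChainAbove F s (m + 1) W

def ForcesColours {k : ℕ} (F : Finset α) (c : α → Fin k) : Prop :=
  ∀ (s : δ) (m : ℕ) (W : α), m < k → ChainAbove f g h F s m W →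
    m + 1 ≤ #(insert (c W) ((predsAbove f g h F W s).image c))

def ColoursChains {k : ℕ} (F : Finset α) (c : α → Fin k) : Prop :=
  ∀ (s : δ) (V : Fin k → α), (∀ i, V i ∈ F) → StrictMono (f ∘ V) → StrictAnti (g ∘ V) →
    (∀ i, s ≤ h (V i)) →
    ∀ i, ∃ U ∈ F, c U = i ∧ s ≤ h U ∧ ∃ j, f U ≤ f (V j) ∧ g (V j) ≤ g U

variable {f g h} {F : Finset α} {s : δ} {a U V W : α}

theorem mem_predsAbove :
    U ∈ predsAbove f g h F W s ↔ U ∈ F ∧ f U < f W ∧ g W < g U ∧ s ≤ h U :=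
  mem_filter

theorem predsAbove_antitone : Antitone (predsAbove f g h F W) := by
  intro s s' hss U hU
  rw [mem_predsAbove] at hU ⊢
  exact ⟨hU.1, hU.2.1, hU.2.2.1, hss.trans hU.2.2.2⟩

theorem predsAbove_subset_of_lt (hf : f V < f W) (hg : g W < g V) :
    predsAbove f g h F V s ⊆ predsAbove f g h F W s := by
  intro U hU
  rw [mem_predsAbove] at hU ⊢
  exact ⟨hU.1, hU.2.1.trans hf, hg.trans hU.2.2.1, hU.2.2.2⟩

theorem notMem_predsAbove_of_le (ha : f W ≤ f a) : a ∉ predsAbove f g h F W s :=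
  fun haW => (mem_predsAbove.1 haW).2.1.not_ge ha

theorem predsAbove_insert [DecidableEq α] (ha : f W ≤ f a) :
    predsAbove f g h (insert a F) W s = predsAbove f g h F W s := by
  ext U
  simp only [mem_predsAbove, mem_insert]
  constructor
  · rintro ⟨rfl | hU, hlt⟩
    · exact absurd hlt.1 ha.not_gt
    · exact ⟨hU, hlt⟩
  · rintro ⟨hU, hlt⟩
    exact ⟨.inr hU, hlt⟩

theorem ChainAbove.mem {m : ℕ} (hW : ChainAbove f g h F s m W) : W ∈ F ∧ s ≤ h W := by
  cases hW with
  | single hWF hsW => exact ⟨hWF, hsW⟩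
  | cons _ hWF hsW => exact ⟨hWF, hsW⟩

theorem ChainAbove.of_insert [DecidableEq α] (hmax : ∀ x ∈ F, f x ≤ f a) {m : ℕ}
    (hW : ChainAbove f g h (insert a F) s m W) (hWa : W ≠ a) : ChainAbove f g h F s m W := by
  induction hW with
  | single hWF hsW => exact .single ((mem_insert.1 hWF).resolve_left hWa) hsW
  | @cons m V W _ hWF hsW hf hg ih =>
    have hWF := (mem_insert.1 hWF).resolve_left hWa
    exact .cons (ih fun hVa => (hVa ▸ hf).not_ge (hmax W hWF)) hWF hsW hf hg

theorem ChainAbove.of_strictMono {n : ℕ} (V : Fin (n + 1) → α) (hVF : ∀ i, V i ∈ F)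
    (hf : StrictMono (f ∘ V)) (hg : StrictAnti (g ∘ V)) (hs : ∀ i, s ≤ h (V i)) :
    ChainAbove f g h F s n (V (Fin.last n)) := by
  induction n with
  | zero => exact .single (hVF _) (hs _)
  | succ n ih =>
    have hlast := Fin.castSucc_lt_last (Fin.last n)
    exact .cons (ih (V ∘ Fin.castSucc) (fun _ => hVF _) (hf.comp Fin.strictMono_castSucc)
      (hg.comp_strictMono Fin.strictMono_castSucc) fun _ => hs _) (hVF _) (hs _)
      (hf hlast) (hg hlast)

theorem ForcesColours.insert_update [DecidableEq α] {k : ℕ} {c : α → Fin k}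
    (hc : ForcesColours f g h F c) (hmax : ∀ x ∈ F, f x ≤ f a) {γ : Fin k}
    (hγ : ∀ s, (predsAbove f g h F a s).image c ≠ univ → γ ∉ (predsAbove f g h F a s).image c) :
    ForcesColours f g h (insert a F) (Function.update c a γ) := by
  intro s m W hm hW
  have himage : ∀ W, f W ≤ f a →
      (predsAbove f g h (insert a F) W s).image (Function.update c a γ) =
        (predsAbove f g h F W s).image c := fun W hWa => by
    rw [predsAbove_insert hWa]
    exact image_congr fun U hU =>
      Function.update_of_ne (fun hUa => notMem_predsAbove_of_le hWa (hUa ▸ hU)) _ _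
  by_cases hWa : W = a
  · subst hWa
    rw [himage W le_rfl, Function.update_self]
    cases hW with
    | single => exact card_pos.2 (insert_nonempty _ _)
    | @cons m V _ hV _ _ hf hg =>
      set C := (predsAbove f g h F W s).image c
      replace hV := hV.of_insert hmax (ne_of_apply_ne f hf.ne)
      have hsub : insert (c V) ((predsAbove f g h F V s).image c) ⊆ C :=
        insert_subset (mem_image_of_mem c (mem_predsAbove.2 ⟨hV.mem.1, hf, hg, hV.mem.2⟩))
          (image_subset_image (predsAbove_subset_of_lt hf hg))
      by_cases hC : C = univ
      · rw [hC, insert_eq_of_mem (mem_univ _), card_univ, Fintype.card_fin]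
        exact hm
      · rw [card_insert_of_notMem (hγ s hC)]
        exact Nat.succ_le_succ ((hc s m V (by omega) hV).trans (card_le_card hsub))
  · have hWF := hW.mem.1
    rw [himage W (hmax W ((mem_insert.1 hWF).resolve_left hWa)), Function.update_of_ne hWa]
    exact hc s m W hm (hW.of_insert hmax hWa)

variable (f g h) in
theorem exists_forcesColours {k : ℕ} [NeZero k] (F : Finset α) :
    ∃ c : α → Fin k, ForcesColours f g h F c := by
  classical
  induction F using Finset.induction_on_max_value f with
  | empty => exact ⟨fun _ => 0, fun s m W _ hW => absurd hW.mem.1 (notMem_empty W)⟩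
  | insert a F _ hmax ih =>
    obtain ⟨c, hc⟩ := ih
    have hanti : Antitone fun s : δ => (predsAbove f g h F a s).image c :=
      (image_mono c).comp_antitone predsAbove_antitone
    obtain ⟨γ, hγ⟩ := hanti.exists_notMem_of_ne_univ
    exact ⟨_, hc.insert_update hmax hγ⟩

theorem ForcesColours.coloursChains {k : ℕ} {c : α → Fin k} (hc : ForcesColours f g h F c) :
    ColoursChains f g h F c := by
  intro s V hVF hf hg hs i
  obtain ⟨n, rfl⟩ := Nat.exists_eq_succ_of_ne_zero i.pos.ne'
  set W := V (Fin.last n)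
  have hcard := hc s n W (Nat.lt_succ_self n) (.of_strictMono V hVF hf hg hs)
  have huniv : insert (c W) ((predsAbove f g h F W s).image c) = univ :=
    eq_univ_of_card _ (le_antisymm (card_le_univ _) (by simpa using hcard))
  rcases mem_insert.1 (huniv ▸ mem_univ i) with hi | hi
  · exact ⟨W, hVF _, hi.symm, hs _, _, le_rfl, le_rfl⟩
  · obtain ⟨U, hU, rfl⟩ := mem_image.1 hi
    obtain ⟨hUF, hfU, hgU, hsU⟩ := mem_predsAbove.1 hU
    exact ⟨U, hUF, rfl, hsU, _, hfU.le, hgU.le⟩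

theorem ColoursChains.of_strictAnti {k : ℕ} {c : α → Fin k} (hc : ColoursChains f g h F c)
    (V : Fin k → α) (hVF : ∀ i, V i ∈ F) (hf : StrictAnti (f ∘ V)) (hg : StrictMono (g ∘ V))
    (hs : ∀ i, s ≤ h (V i)) (i : Fin k) :
    ∃ U ∈ F, c U = i ∧ s ≤ h U ∧ ∃ j, f U ≤ f (V j) ∧ g (V j) ≤ g U := by
  obtain ⟨U, hUF, hcU, hsU, j, hfU, hgU⟩ := hc s (V ∘ Fin.rev) (fun _ => hVF _)
    (hf.comp Fin.rev_strictAnti) (hg.comp_strictAnti Fin.rev_strictAnti) (fun _ => hs _) i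
  exact ⟨U, hUF, hcU, hsU, _, hfU, hgU⟩

end Chains

theorem goodColouring_of_coloursChains {k : ℕ} {F : Finset BRect} {c : BRect → Fin k}
    {f g h : BRect → ℝ} (hc : ColoursChains f g h F c) (σ : ℝ × ℝ → ℝ)
    (hσ : ∀ p W, W.covers p → σ p ≤ h W)
    (hcov : ∀ p W U, W.covers p → f U ≤ f W → g W ≤ g U → σ p ≤ h U → U.covers p)
    (cfg : (Fin k → BRect) → Prop)
    (hcfg : ∀ R, cfg R →
      StrictMono (f ∘ R) ∧ StrictAnti (g ∘ R) ∨ StrictAnti (f ∘ R) ∧ StrictMono (g ∘ R)) :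
    GoodColouring k F cfg c := by
  rintro p ⟨R, hRF, hRp, hR⟩ i
  have hσR j := hσ p _ (hRp j)
  obtain ⟨U, hUF, hcU, hσU, j, hfU, hgU⟩ :
      ∃ U ∈ F, c U = i ∧ σ p ≤ h U ∧ ∃ j, f U ≤ f (R j) ∧ g (R j) ≤ g U := by
    rcases hcfg R hR with ⟨hf, hg⟩ | ⟨hf, hg⟩
    · exact hc _ R hRF hf hg hσR i
    · exact hc.of_strictAnti R hRF hf hg hσR i
  exact ⟨U, hUF, hcov p _ _ (hRp j) hfU hgU hσU, hcU⟩

theorem configs_pairs_polychromatic_general (k : ℕ) (hk : 1 ≤ k) (F : Finset BRect) :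
    (∃ c : BRect → Fin k, GoodColouring k F TowerCfg c ∧ GoodColouring k F NestedCfg c) ∧
    (∃ c : BRect → Fin k, GoodColouring k F IncSteps c ∧ GoodColouring k F NestedCfg c) ∧
    (∃ c : BRect → Fin k, GoodColouring k F DecSteps c ∧ GoodColouring k F NestedCfg c) := by
  have : NeZero k := ⟨by omega⟩
  refine ⟨?_, ?_, ?_⟩
  · obtain ⟨c, hc⟩ := exists_forcesColours BRect.l BRect.r BRect.t F (k := k)
    have good := goodColouring_of_coloursChains hc.coloursChains (fun p => p.2)
      (fun _ _ hW => hW.2.2) fun _ _ _ hW hl hr ht => ⟨hl.trans hW.1, hW.2.1.trans hr, ht⟩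
    exact ⟨c, good _ fun _ hR => .inl ⟨hR.1, hR.2.1⟩, good _ fun _ hR => .inl ⟨hR.1, hR.2.1⟩⟩
  · obtain ⟨c, hc⟩ :=
      exists_forcesColours (fun R => -R.r) BRect.t (fun R => -R.l) F (k := k)
    have good := goodColouring_of_coloursChains hc.coloursChains (fun p => -p.1)
      (fun _ _ hW => neg_le_neg hW.1) fun _ _ _ hW hr ht hl =>
        ⟨by linarith, by linarith [hW.2.1], hW.2.2.trans ht⟩
    exact ⟨c, good _ fun _ hR => .inr ⟨hR.2.1.neg, hR.2.2⟩,
      good _ fun _ hR => .inl ⟨hR.2.1.neg, hR.2.2⟩⟩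
  · obtain ⟨c, hc⟩ := exists_forcesColours BRect.l BRect.t BRect.r F (k := k)
    have good := goodColouring_of_coloursChains hc.coloursChains (fun p => p.1)
      (fun _ _ hW => hW.2.1) fun _ _ _ hW hl ht hr => ⟨hl.trans hW.1, hr, hW.2.2.trans ht⟩
    exact ⟨c, good _ fun _ hR => .inl ⟨hR.1, hR.2.2⟩, good _ fun _ hR => .inl ⟨hR.1, hR.2.2⟩⟩

/-- A single `k`-colouring can handle nested sets together with each of the other three
configuration types. -/
theorem configs_pairs_polychromatic (k : ℕ) (hk : 1 ≤ k) (F : Finset BRect)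
    (hF : GenPos F) :
    (∃ c : BRect → Fin k, GoodColouring k F TowerCfg c ∧ GoodColouring k F NestedCfg c) ∧
    (∃ c : BRect → Fin k, GoodColouring k F IncSteps c ∧ GoodColouring k F NestedCfg c) ∧
    (∃ c : BRect → Fin k, GoodColouring k F DecSteps c ∧ GoodColouring k F NestedCfg c) :=
  configs_pairs_polychromatic_general k hk F
end

section
/- Let k ≥ 1 and let F be a finite family of bottomless rectangles in general position such that no two rectangles of F form a tower or a nested pair. Then there exists a colouring c : F → {1, …, k} such that every point covered by at least 2k − 1 rectangles of F is covered by all k colours. -/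
/-- Two bottomless rectangles form a tower. -/
def TowerPair (A B : BRect) : Prop :=
  (A.l < B.l ∧ B.r < A.r ∧ A.t < B.t) ∨ (B.l < A.l ∧ A.r < B.r ∧ B.t < A.t)

/-- Two bottomless rectangles form a nested pair. -/
def NestedPair (A B : BRect) : Prop :=
  (A.l < B.l ∧ B.r < A.r ∧ B.t < A.t) ∨ (B.l < A.l ∧ A.r < B.r ∧ A.t < B.t)

/-- The colouring `c` is polychromatic with threshold `N`: every point covered by at
least `N` rectangles of `F` is covered by all `k` colours. -/
def Polychromatic (k N : ℕ) (F : Finset BRect) (c : BRect → Fin k) : Prop :=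
  ∀ p : ℝ × ℝ,
    (∃ G ⊆ F, N ≤ G.card ∧ ∀ R ∈ G, R.covers p) →
    ∀ i : Fin k, ∃ R ∈ F, R.covers p ∧ c R = i

open Finset

section Highest

variable {α β : Type*} [LinearOrder α]

def highest (A : Finset β) (f : β → α) (m : ℕ) : Finset β :=
  {a ∈ A | #{b ∈ A | f a < f b} < m}

variable {A : Finset β} {f : β → α} {m : ℕ}

theorem mem_highest {a : β} : a ∈ highest A f m ↔ a ∈ A ∧ #{b ∈ A | f a < f b} < m := by
  simp [highest]

theorem le_card_highest (h : m ≤ #A) : m ≤ #(highest A f m) := by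
  classical
  by_contra! hlt
  have hne : (A \ highest A f m).Nonempty := by
    have hsub : highest A f m ⊆ A := filter_subset _ _
    have := card_sdiff_of_subset hsub
    exact card_pos.1 (by omega)
  -- Whatever lies strictly above the highest element missing from `highest A f m` is in it.
  obtain ⟨a, ha, hmax⟩ := exists_max_image _ f hne
  obtain ⟨haA, ha_not⟩ := mem_sdiff.1 ha
  have habove : {b ∈ A | f a < f b} ⊆ highest A f m := by
    intro b hb
    obtain ⟨hbA, hab⟩ := mem_filter.1 hb
    by_contra hb_not
    exact (hmax b (mem_sdiff.2 ⟨hbA, hb_not⟩)).not_gt hab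
  exact ha_not (mem_highest.2 ⟨haA, (card_le_card habove).trans_lt hlt⟩)

theorem highest_subset_filter_le {y : α} (h : m ≤ #{a ∈ A | y ≤ f a}) :
    highest A f m ⊆ {a ∈ A | y ≤ f a} := by
  intro a ha
  obtain ⟨haA, hcard⟩ := mem_highest.1 ha
  refine mem_filter.2 ⟨haA, ?_⟩
  by_contra! hay
  have hsub : {b ∈ A | y ≤ f b} ⊆ {b ∈ A | f a < f b} :=
    monotone_filter_right _ fun _ _ => hay.trans_le
  exact (h.trans (card_le_card hsub)).not_gt hcard

theorem mem_highest_of_forall_le {a : β} (ha : a ∈ A) (hmax : ∀ b ∈ A, f b ≤ f a) (hm : 0 < m) :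
    a ∈ highest A f m := by
  refine mem_highest.2 ⟨ha, ?_⟩
  rwa [filter_false_of_mem fun b hb => (hmax b hb).not_gt, card_empty]

end Highest

section OrdConnected

variable {α : Type*} [LinearOrder α] {s t u : Set α} {x : α}

theorem Set.OrdConnected.lt_and_lt_or_lt_and_lt_of_mem_diff (hs : s.OrdConnected)
    (ht : t.OrdConnected) (hxs : x ∈ s) (hxt : x ∈ t) {a b : α} (ha : a ∈ s \ t)
    (hb : b ∈ t \ s) : (a < x ∧ x < b) ∨ (b < x ∧ x < a) := by
  have hax : a ≠ x := fun h => ha.2 (h ▸ hxt)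
  have hbx : b ≠ x := fun h => hb.2 (h ▸ hxs)
  rcases hax.lt_or_gt with hax | hax <;> rcases hbx.lt_or_gt with hbx | hbx
  · rcases le_total a b with hab | hab
    · exact absurd (hs.out ha.1 hxs ⟨hab, hbx.le⟩) hb.2
    · exact absurd (ht.out hb.1 hxt ⟨hab, hax.le⟩) ha.2
  · exact Or.inl ⟨hax, hbx⟩
  · exact Or.inr ⟨hbx, hax⟩
  · rcases le_total a b with hab | hab
    · exact absurd (ht.out hxt hb.1 ⟨hax.le, hab⟩) ha.2
    · exact absurd (hs.out hxs ha.1 ⟨hbx.le, hab⟩) hb.2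

/-- Pairwise, points private to one of the sets lie on opposite sides of `x`, which three
points cannot do. -/
theorem Set.OrdConnected.subset_union_or_subset_union_or_subset_union (hs : s.OrdConnected)
    (ht : t.OrdConnected) (hu : u.OrdConnected) (hxs : x ∈ s) (hxt : x ∈ t) (hxu : x ∈ u) :
    s ⊆ t ∪ u ∨ t ⊆ s ∪ u ∨ u ⊆ s ∪ t := by
  by_contra! h
  obtain ⟨⟨a, has, ha⟩, ⟨b, hbt, hb⟩, ⟨c, hcu, hc⟩⟩ :=
    And.imp Set.not_subset.1 (And.imp Set.not_subset.1 Set.not_subset.1) h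
  simp only [Set.mem_union, not_or] at ha hb hc
  have hab := hs.lt_and_lt_or_lt_and_lt_of_mem_diff ht hxs hxt ⟨has, ha.1⟩ ⟨hbt, hb.1⟩
  have hac := hs.lt_and_lt_or_lt_and_lt_of_mem_diff hu hxs hxu ⟨has, ha.2⟩ ⟨hcu, hc.1⟩
  have hbc := ht.lt_and_lt_or_lt_and_lt_of_mem_diff hu hxt hxu ⟨hbt, hb.2⟩ ⟨hcu, hc.2⟩
  rcases hab with hab | hab <;> rcases hac with hac | hac <;> rcases hbc with hbc | hbc <;> order

end OrdConnected

open Classical in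
theorem exists_subset_biUnion_eq_and_card_filter_mem_le_two {ι α : Type*} [LinearOrder α]
    (I : ι → Set α) (Z : Finset ι) (hI : ∀ i ∈ Z, (I i).OrdConnected) :
    ∃ S ⊆ Z, ⋃ i ∈ S, I i = ⋃ i ∈ Z, I i ∧ ∀ x, #{i ∈ S | x ∈ I i} ≤ 2 := by
  obtain ⟨S, hS, hmin⟩ :=
    exists_min_image {S ∈ Z.powerset | ⋃ i ∈ S, I i = ⋃ i ∈ Z, I i} card ⟨Z, by simp⟩
  obtain ⟨hSZ, hcov⟩ : S ⊆ Z ∧ ⋃ i ∈ S, I i = ⋃ i ∈ Z, I i := by simpa using hS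
  refine ⟨S, hSZ, hcov, fun x => ?_⟩
  by_contra! h3
  obtain ⟨a, ha, b, hb, c, hc, hab, hac, hbc⟩ := two_lt_card.1 h3
  simp only [mem_filter] at ha hb hc
  have h_not_redundant : ∀ a ∈ S, ∀ b ∈ S, ∀ c ∈ S, a ≠ b → a ≠ c → ¬ I a ⊆ I b ∪ I c := by
    intro a ha b hb c hc hab hac hsub
    have hcov' : ⋃ i ∈ S.erase a, I i = ⋃ i ∈ S, I i := by
      conv_rhs => rw [← insert_erase ha, set_biUnion_insert]
      rw [eq_comm, Set.union_eq_right]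
      exact hsub.trans (Set.union_subset (Set.subset_biUnion_of_mem (mem_erase.2 ⟨hab.symm, hb⟩))
        (Set.subset_biUnion_of_mem (mem_erase.2 ⟨hac.symm, hc⟩)))
    have := hmin (S.erase a)
      (mem_filter.2 ⟨mem_powerset.2 ((erase_subset a S).trans hSZ), hcov'.trans hcov⟩)
    exact this.not_gt (card_erase_lt_of_mem ha)
  rcases (hI a (hSZ ha.1)).subset_union_or_subset_union_or_subset_union (hI b (hSZ hb.1))
    (hI c (hSZ hc.1)) ha.2 hb.2 hc.2 with h | h | h
  · exact h_not_redundant a ha.1 b hb.1 c hc.1 hab hac h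
  · exact h_not_redundant b hb.1 a ha.1 c hc.1 hab.symm hbc h
  · exact h_not_redundant c hc.1 a ha.1 b hb.1 hac.symm hbc.symm h

def Unnested (F : Finset BRect) : Prop :=
  ∀ u ∈ F, ∀ v ∈ F, u.l < v.l → u.r ≤ v.r

theorem unnested_of_genPos {F : Finset BRect} (hF : GenPos F)
    (hfree : ∀ R ∈ F, ∀ R' ∈ F, ¬ TowerPair R R' ∧ ¬ NestedPair R R') : Unnested F := by
  intro u hu v hv hl
  by_contra! hr
  have huv : u ≠ v := by rintro rfl; exact hl.false
  rcases (hF u hu v hv huv).2.2.lt_or_gt with ht | ht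
  · exact (hfree u hu v hv).1 (Or.inl ⟨hl, hr, ht⟩)
  · exact (hfree u hu v hv).2 (Or.inl ⟨hl, hr, ht⟩)

theorem Unnested.mono {F G : Finset BRect} (hF : Unnested F) (hG : G ⊆ F) : Unnested G :=
  fun u hu v hv => hF u (hG hu) v (hG hv)

noncomputable def alive (F : Finset BRect) (x : ℝ) : Finset BRect :=
  {R ∈ F | R.l ≤ x ∧ x ≤ R.r}

noncomputable def topSet (F : Finset BRect) (m : ℕ) (x : ℝ) : Finset BRect :=
  highest (alive F x) BRect.t m

theorem mem_alive {F : Finset BRect} {x : ℝ} {R : BRect} :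
    R ∈ alive F x ↔ R ∈ F ∧ R.l ≤ x ∧ x ≤ R.r :=
  mem_filter

open Classical in
theorem filter_covers_eq_filter_alive (F : Finset BRect) (p : ℝ × ℝ) :
    {R ∈ F | R.covers p} = {R ∈ alive F p.1 | p.2 ≤ R.t} := by
  ext R
  simp only [mem_filter, mem_alive]
  simp only [BRect.covers, and_assoc]

namespace Unnested

variable {F : Finset BRect} (hF : Unnested F) {v : BRect} {x₀ : ℝ}
  (hv : v ∈ alive F x₀) (hmax : ∀ u ∈ alive F x₀, u.t ≤ v.t)
include hF hv hmax

/-- A rectangle above `v` that is alive at `x ≥ x₀` was not alive at `x₀`, so it starts after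
`v` and hence, the family being unnested, ends after `v` too. -/
theorem filter_alive_lt_subset_of_le {x y : ℝ} (hx : x₀ ≤ x) (hxy : x ≤ y) (hy : y ≤ v.r) :
    {u ∈ alive F x | v.t < u.t} ⊆ {u ∈ alive F y | v.t < u.t} := by
  intro u hu
  obtain ⟨hux, hvu⟩ := mem_filter.1 hu
  obtain ⟨huF, hlu, hru⟩ := mem_alive.1 hux
  have hlu₀ : x₀ < u.l := by
    by_contra! h
    exact (hmax u (mem_alive.2 ⟨huF, h, hx.trans hru⟩)).not_gt hvu
  have hrvu : v.r ≤ u.r := hF v (mem_alive.1 hv).1 u huF ((mem_alive.1 hv).2.1.trans_lt hlu₀)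
  exact mem_filter.2 ⟨mem_alive.2 ⟨huF, hlu.trans hxy, hy.trans hrvu⟩, hvu⟩

theorem filter_alive_lt_subset_of_ge {x y : ℝ} (hx : x ≤ x₀) (hyx : y ≤ x) (hy : v.l ≤ y) :
    {u ∈ alive F x | v.t < u.t} ⊆ {u ∈ alive F y | v.t < u.t} := by
  intro u hu
  obtain ⟨hux, hvu⟩ := mem_filter.1 hu
  obtain ⟨huF, hlu, hru⟩ := mem_alive.1 hux
  have hru₀ : u.r < x₀ := by
    by_contra! h
    exact (hmax u (mem_alive.2 ⟨huF, hlu.trans hx, h⟩)).not_gt hvu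
  have hluv : u.l ≤ v.l := by
    by_contra! h
    exact (hF v (mem_alive.1 hv).1 u huF h).not_gt (hru₀.trans_le (mem_alive.1 hv).2.2)
  exact mem_filter.2 ⟨mem_alive.2 ⟨huF, hluv.trans hy, hyx.trans hru⟩, hvu⟩

theorem ordConnected_setOf_mem_topSet (m : ℕ) : {x | v ∈ topSet F m x}.OrdConnected := by
  refine ⟨fun a ha c hc b ⟨hab, hbc⟩ => ?_⟩
  obtain ⟨hva, hca⟩ := mem_highest.1 ha
  obtain ⟨hvc, hcc⟩ := mem_highest.1 hc
  obtain ⟨hvF, hla, -⟩ := mem_alive.1 hva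
  obtain ⟨-, -, hrc⟩ := mem_alive.1 hvc
  refine mem_highest.2 ⟨mem_alive.2 ⟨hvF, hla.trans hab, hbc.trans hrc⟩, ?_⟩
  rcases le_total x₀ b with h₀ | h₀
  · exact (card_le_card (hF.filter_alive_lt_subset_of_le hv hmax h₀ hbc hrc)).trans_lt hcc
  · exact (card_le_card (hF.filter_alive_lt_subset_of_ge hv hmax h₀ hab hla)).trans_lt hca

end Unnested

open Classical in
theorem Unnested.exists_shallow_hitting_subset {F : Finset BRect} (hF : Unnested F) {m : ℕ}
    (hm : 0 < m) :
    ∃ S ⊆ F, (∀ x, (topSet F m x).Nonempty → ∃ s ∈ S, s ∈ topSet F m x) ∧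
      ∀ x, #{s ∈ S | s ∈ topSet F m x} ≤ 2 := by
  set Z := {v ∈ F | ∃ x₀, v ∈ alive F x₀ ∧ ∀ u ∈ alive F x₀, u.t ≤ v.t}
  obtain ⟨S, hSZ, hcov, hply⟩ := exists_subset_biUnion_eq_and_card_filter_mem_le_two
    (fun v => {x | v ∈ topSet F m x}) Z fun v hv => by
      obtain ⟨-, x₀, hv, hmax⟩ := mem_filter.1 hv
      exact hF.ordConnected_setOf_mem_topSet hv hmax m
  refine ⟨S, hSZ.trans (filter_subset _ _), fun x hx => ?_, fun x => by simpa using hply x⟩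
  obtain ⟨v, hv, hmax⟩ := exists_max_image (alive F x) BRect.t (hx.mono (filter_subset _ _))
  have hvZ : v ∈ Z := mem_filter.2 ⟨(mem_alive.1 hv).1, x, hv, hmax⟩
  have hx : x ∈ ⋃ s ∈ S, {x | s ∈ topSet F m x} :=
    hcov ▸ Set.mem_biUnion hvZ (mem_highest_of_forall_le hv hmax hm)
  simpa using hx

section Covering

variable {F G : Finset BRect} {m : ℕ} {p : ℝ × ℝ} (hGF : G ⊆ F) (hG : m ≤ #G)
  (hcov : ∀ R ∈ G, R.covers p)
include hGF hG hcov

theorem le_card_topSet_of_covers : m ≤ #(topSet F m p.1) :=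
  le_card_highest <| hG.trans <|
    card_le_card fun R hR => mem_alive.2 ⟨hGF hR, (hcov R hR).1, (hcov R hR).2.1⟩

theorem covers_of_mem_topSet {R : BRect} (hR : R ∈ topSet F m p.1) : R ∈ F ∧ R.covers p := by
  classical
  have hGE : G ⊆ {R ∈ F | R.covers p} := fun R hR => mem_filter.2 ⟨hGF hR, hcov R hR⟩
  rw [filter_covers_eq_filter_alive] at hGE
  have hRE := highest_subset_filter_le (hG.trans (card_le_card hGE)) hR
  rwa [← filter_covers_eq_filter_alive, mem_filter] at hRE

end Covering

theorem polychromatic_one (F : Finset BRect) (c : BRect → Fin 1) : Polychromatic 1 1 F c := by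
  rintro p ⟨G, hGF, hG, hcov⟩ i
  obtain ⟨R, hR⟩ := card_pos.1 hG
  exact ⟨R, hGF hR, hcov R hR, Subsingleton.elim _ _⟩

theorem Unnested.exists_polychromatic {k : ℕ} (hk : 1 ≤ k) {F : Finset BRect}
    (hF : Unnested F) : ∃ c : BRect → Fin k, Polychromatic k (2 * k - 1) F c := by
  classical
  induction k, hk using Nat.le_induction generalizing F with
  | base => exact ⟨fun _ => 0, polychromatic_one F _⟩
  | succ k _ ih =>
    obtain ⟨S, hSF, hShits, hSply⟩ :=
      hF.exists_shallow_hitting_subset (m := 2 * (k + 1) - 1) (by omega)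
    obtain ⟨c, hc⟩ := ih (hF.mono (sdiff_subset : F \ S ⊆ F))
    refine ⟨fun R => if R ∈ S then Fin.last k else (c R).castSucc, ?_⟩
    rintro p ⟨G, hGF, hG, hcov⟩ i
    set T := topSet F (2 * (k + 1) - 1) p.1
    have hT : 2 * (k + 1) - 1 ≤ #T := le_card_topSet_of_covers hGF hG hcov
    have hTcov : ∀ R ∈ T, R ∈ F ∧ R.covers p := fun R => covers_of_mem_topSet hGF hG hcov
    induction i using Fin.lastCases with
    | last =>
      obtain ⟨s, hsS, hsT⟩ := hShits p.1 (card_pos.1 ((by omega : 0 < 2 * (k + 1) - 1).trans_le hT))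
      exact ⟨s, (hTcov s hsT).1, (hTcov s hsT).2, by simp [hsS]⟩
    | cast j =>
      have hTS : 2 * k - 1 ≤ #(T \ S) := by
        have hST : #(S ∩ T) ≤ 2 := by rw [← filter_mem_eq_inter]; exact hSply p.1
        rw [card_sdiff]
        omega
      have hTSF : T \ S ⊆ F \ S := sdiff_subset_sdiff (fun R hR => (hTcov R hR).1) subset_rfl
      obtain ⟨R, hR, hRp, hRc⟩ :=
        hc p ⟨T \ S, hTSF, hTS, fun R hR => (hTcov R (mem_sdiff.1 hR).1).2⟩ j
      obtain ⟨hRF, hRS⟩ := mem_sdiff.1 hR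
      exact ⟨R, hRF, hRp, by simp [hRS, hRc]⟩

/-- For tower- and nested-pair-free ("steps") families, `m_k^* ≤ 2k - 1`. -/
theorem steps_mk_le (k : ℕ) (hk : 1 ≤ k) (F : Finset BRect) (hF : GenPos F)
    (hfree : ∀ R ∈ F, ∀ R' ∈ F, ¬ TowerPair R R' ∧ ¬ NestedPair R R') :
    ∃ c : BRect → Fin k, Polychromatic k (2 * k - 1) F c :=
  (unnested_of_genPos hF hfree).exists_polychromatic hk
end

section
/- Let R₁, R₂, R₃ be bottomless rectangles with pairwise distinct left coordinates, pairwise distinct right coordinates, and pairwise distinct top coordinates, with left coordinates satisfying l₁ < l₂ < l₃, and suppose that no two of R₁, R₂, R₃ form a tower. Then there do not exist points p, q ∈ ℝ² such that p is covered by R₁ and by R₃ but not by R₂, while q is covered by R₂ but neither by R₁ nor by R₃. -/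
namespace BRect

variable {A B C R : BRect} {p q : ℝ × ℝ}

theorem right_lt_or_top_lt_of_not_covers (hl : R.l ≤ p.1) (h : ¬ R.covers p) :
    R.r < p.1 ∨ R.t < p.2 := by
  unfold covers at h
  by_contra! h'
  exact h ⟨hl, h'⟩

theorem covers_of_le (hq : B.covers q) (hl : A.l ≤ B.l) (hr : B.r ≤ A.r) (ht : B.t ≤ A.t) :
    A.covers q :=
  ⟨hl.trans hq.1, hq.2.1.trans hr, hq.2.2.trans ht⟩

theorem top_le_of_not_towerPair (h : ¬ TowerPair A B) (hl : A.l < B.l) (hr : B.r < A.r) :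
    B.t ≤ A.t :=
  not_lt.1 fun ht => h (Or.inl ⟨hl, hr, ht⟩)

theorem right_le_of_not_towerPair (h : ¬ TowerPair A B) (hl : A.l < B.l) (ht : A.t < B.t) :
    A.r ≤ B.r :=
  not_lt.1 fun hr => h (Or.inl ⟨hl, hr, ht⟩)

theorem covers_of_not_towerPair_of_right_lt (h : ¬ TowerPair A B) (hl : A.l < B.l)
    (hr : B.r < A.r) (hq : B.covers q) : A.covers q :=
  covers_of_le hq hl.le hr.le (top_le_of_not_towerPair h hl hr)

theorem covers_or_covers_of_not_towerPair (h : ¬ TowerPair B C) (hAB : A.l ≤ B.l)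
    (hBC : B.l < C.l) (htA : B.t ≤ A.t) (htC : B.t < C.t) (hCA : C.l ≤ A.r)
    (hq : B.covers q) : A.covers q ∨ C.covers q := by
  rcases le_or_gt q.1 A.r with hqA | hqA
  · exact Or.inl ⟨hAB.trans hq.1, hqA, hq.2.2.trans htA⟩
  · exact Or.inr ⟨hCA.trans hqA.le, hq.2.1.trans (right_le_of_not_towerPair h hBC htC),
      hq.2.2.trans htC.le⟩

end BRect

theorem towerfree_ABA_free_general (R₁ R₂ R₃ : BRect)
    (hl : R₁.l < R₂.l ∧ R₂.l < R₃.l)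
    (htower : ¬ TowerPair R₁ R₂ ∧ ¬ TowerPair R₁ R₃ ∧ ¬ TowerPair R₂ R₃) :
    ¬ ∃ p q : ℝ × ℝ,
        (R₁.covers p ∧ R₃.covers p ∧ ¬ R₂.covers p) ∧
        (R₂.covers q ∧ ¬ R₁.covers q ∧ ¬ R₃.covers q) := by
  rintro ⟨p, q, ⟨hp₁, hp₃, hp₂⟩, hq₂, hq₁, hq₃⟩
  rcases BRect.right_lt_or_top_lt_of_not_covers (hl.2.le.trans hp₃.1) hp₂ with hr | ht
  · exact hq₁ <| BRect.covers_of_not_towerPair_of_right_lt htower.1 hl.1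
      (hr.trans_le hp₁.2.1) hq₂
  · exact (BRect.covers_or_covers_of_not_towerPair htower.2.2 hl.1.le hl.2 (ht.le.trans hp₁.2.2)
      (ht.trans_le hp₃.2.2) (hp₃.1.trans hp₁.2.1) hq₂).elim hq₁ hq₃

/-- ABA-freeness for tower-free triples of bottomless rectangles: there are no points
`p ∈ (R₁ ∩ R₃) \ R₂` and `q ∈ R₂ \ (R₁ ∪ R₃)`. -/
theorem towerfree_ABA_free (R₁ R₂ R₃ : BRect)
    (hl : R₁.l < R₂.l ∧ R₂.l < R₃.l)
    (hr : R₁.r ≠ R₂.r ∧ R₁.r ≠ R₃.r ∧ R₂.r ≠ R₃.r)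
    (ht : R₁.t ≠ R₂.t ∧ R₁.t ≠ R₃.t ∧ R₂.t ≠ R₃.t)
    (htower : ¬ TowerPair R₁ R₂ ∧ ¬ TowerPair R₁ R₃ ∧ ¬ TowerPair R₂ R₃) :
    ¬ ∃ p q : ℝ × ℝ,
        (R₁.covers p ∧ R₃.covers p ∧ ¬ R₂.covers p) ∧
        (R₂.covers q ∧ ¬ R₁.covers q ∧ ¬ R₃.covers q) :=
  towerfree_ABA_free_general R₁ R₂ R₃ hl htower
end

section
/- For every integer h ≥ 0 there exist a real number r < 1 and an integer D ≥ 1 such that for every integer d ≥ D there is a finite family F of bottomless rectangles with the following property: for every subset H ⊆ F such that every point of depth exactly d in F is covered by at least one rectangle of H, there exists a real number a such that the number of rectangles (l, r', t) ∈ F with l ≤ a ≤ r' is at most ⌈r·d⌉, while the number of rectangles (l, r', t) ∈ H with l ≤ a ≤ r' is at least h. -/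
open scoped Classical

/-- The depth of a point in a finite family: the number of rectangles covering it. -/
noncomputable def depth (G : Finset BRect) (p : ℝ × ℝ) : ℕ :=
  (G.filter (fun R => R.covers p)).card

/-!
The family is a recursive gadget drawn in a box. At level `n + 1`, a gadget of size `m` consists
of two fans of nested rectangles sharing the vertical line through the centre of the box,
`⌈m/2⌉` opening to the left and `⌊m/2⌋` to the right, the `k`-th rectangle of each fan being
`k + 1` units wide with its top `k + 1` units above the bottom of the box; in the slot between the
ends of the `(k-1)`-st and `k`-th rectangle of a fan, just above the top of the `k`-th, sits a
level-`n` gadget of size `k + 1 + (size of the other fan)`.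

The rectangles of the surrounding family that lie above the box raise the depth of every point
of the box by the same amount `d - m`. A point at the centre, just above the bottom, is then
covered by all `m` fan rectangles, so it has depth `d` and a hitting set `H` contains a fan
rectangle. If `j` is the widest rectangle of its fan in `H`, the wider ones lie above the slot of
`j` and are not in `H`, so the slot is again the box of a gadget of depth `d`, now of size at
least `m / 2`. By induction a vertical line through the slot meets `n` rectangles of `H` in the
inner gadget, and it also meets `j`, but it misses the other fan and the narrower rectangles of
this one. Thus the line meets at most `(1 - 2⁻ⁿ) m + n` rectangles of a level-`n` gadget of
size `m`, besides those spanning its box, which is `≤ (1 - 2⁻⁽ʰ⁺¹⁾) d` for `n = h` and `m = d`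
large.
-/

open Finset

abbrev BRect.Meets (R : BRect) (x : ℝ) : Prop := R.l ≤ x ∧ x ≤ R.r

lemma BRect.covers_iff {R : BRect} {x y : ℝ} : R.covers (x, y) ↔ R.Meets x ∧ y ≤ R.t :=
  and_assoc.symm

inductive Side
  | left
  | right
  deriving DecidableEq

namespace Side

/-- `s.lo c p q` and `s.hi c p q` are the ends of the segment of the points on side `s` of `c`
at distance between `p` and `q` from `c`. -/
def lo : Side → ℝ → ℝ → ℝ → ℝ
  | left, c, _, q => c - q
  | right, c, p, _ => c + p

def hi : Side → ℝ → ℝ → ℝ → ℝ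
  | left, c, p, _ => c - p
  | right, c, _, q => c + q

def count : Side → ℕ → ℕ
  | left, m => (m + 1) / 2
  | right, m => m / 2

def subSize (s : Side) (m k : ℕ) : ℕ := k + 1 + (m - s.count m)

variable (s : Side) {c p q p' q' : ℝ}

lemma lo_le_lo (hp : p ≤ p') (hq : q' ≤ q) : s.lo c p q ≤ s.lo c p' q' := by
  cases s <;> simp only [lo] <;> linarith

lemma hi_le_hi (hp : p ≤ p') (hq : q' ≤ q) : s.hi c p' q' ≤ s.hi c p q := by
  cases s <;> simp only [hi] <;> linarith

lemma lo_lt_lo (hp : p < p') (hq : q' < q) : s.lo c p q < s.lo c p' q' := by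
  cases s <;> simp only [lo] <;> linarith

lemma hi_lt_hi (hp : p < p') (hq : q' < q) : s.hi c p' q' < s.hi c p q := by
  cases s <;> simp only [hi] <;> linarith

lemma lo_le_hi (h : p ≤ q) : s.lo c p q ≤ s.hi c p q := by
  cases s <;> simp only [lo, hi] <;> linarith

lemma lo_lt_hi (h : p < q) : s.lo c p q < s.hi c p q := by
  cases s <;> simp only [lo, hi] <;> linarith

lemma lo_neg_self (r : ℝ) : s.lo c (-r) r = c - r := by
  cases s <;> simp only [lo, sub_eq_add_neg]

lemma hi_neg_self (r : ℝ) : s.hi c (-r) r = c + r := by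
  cases s <;> simp only [hi, sub_eq_add_neg, neg_neg]

lemma lo_le_self_le_hi (hq : 0 ≤ q) : s.lo c 0 q ≤ c ∧ c ≤ s.hi c 0 q := by
  cases s <;> simp only [lo, hi] <;> constructor <;> linarith

lemma hi_le_self_or_self_le_lo (hp : 0 ≤ p) : s.hi c p q ≤ c ∨ c ≤ s.lo c p q := by
  cases s <;> simp only [lo, hi]
  exacts [Or.inl (by linarith), Or.inr (by linarith)]

lemma separated_of_le (h : q ≤ p') : s.hi c p q ≤ s.lo c p' q' ∨ s.hi c p' q' ≤ s.lo c p q := by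
  cases s <;> simp only [lo, hi]
  exacts [Or.inr (by linarith), Or.inl (by linarith)]

lemma separated_of_ne {s s' : Side} (hs : s ≠ s') (h : 0 ≤ p + p') :
    s.hi c p q ≤ s'.lo c p' q' ∨ s'.hi c p' q' ≤ s.lo c p q := by
  cases s <;> cases s' <;> simp only [lo, hi, ne_eq, not_true_eq_false] at hs ⊢
  exacts [Or.inl (by linarith), Or.inr (by linarith)]

lemma exists_iff {P : Side → Prop} : (∃ s, P s) ↔ P left ∨ P right :=
  ⟨fun ⟨s, h⟩ => by cases s; exacts [Or.inl h, Or.inr h], fun h => h.elim (⟨_, ·⟩) (⟨_, ·⟩)⟩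

variable (m : ℕ)

lemma count_left_add_count_right : left.count m + right.count m = m := by
  simp only [count]; omega

lemma count_le : s.count m ≤ m := by
  cases s <;> simp only [count] <;> omega

lemma count_le_sub_add_one : s.count m ≤ m - s.count m + 1 := by
  cases s <;> simp only [count] <;> omega

end Side

structure Box where
  u : ℝ
  v : ℝ
  y₀ : ℝ
  y₁ : ℝ
  u_lt_v : u < v
  y₀_lt_y₁ : y₀ < y₁

namespace Box

def Spans (B : Box) (R : BRect) : Prop := R.l ≤ B.u ∧ B.v ≤ R.r

def Above (B : Box) (R : BRect) : Prop := B.Spans R ∧ B.y₁ ≤ R.t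

def Below (B : Box) (R : BRect) : Prop := B.Spans R ∧ R.t ≤ B.y₀

def Beside (B : Box) (R : BRect) : Prop := R.r ≤ B.u ∨ B.v ≤ R.l

def Inside (B : Box) (R : BRect) : Prop := B.u < R.l ∧ R.r < B.v ∧ B.y₀ < R.t ∧ R.t < B.y₁

def Compatible (B : Box) (R : BRect) : Prop := B.Beside R ∨ B.Above R ∨ B.Below R

def Within (B B' : Box) : Prop := B'.u ≤ B.u ∧ B.v ≤ B'.v ∧ B'.y₀ ≤ B.y₀ ∧ B.y₁ ≤ B'.y₁

def Apart (B B' : Box) : Prop := B.v ≤ B'.u ∨ B'.v ≤ B.u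

variable {B B' : Box} {R : BRect} {x : ℝ}

lemma Inside.not_spans (h : B.Inside R) : ¬B.Spans R :=
  fun hs => (h.1.trans_le hs.1).false

lemma Beside.not_spans (h : B.Beside R) : ¬B.Spans R := by
  rintro ⟨hl, hr⟩
  have := B.u_lt_v
  have := R.hlr
  rcases h with h | h <;> linarith

lemma Beside.not_meets (h : B.Beside R) (hu : B.u < x) (hv : x < B.v) : ¬R.Meets x := by
  rintro ⟨hl, hr⟩
  rcases h with h | h <;> linarith

lemma Spans.meets (h : B.Spans R) (hu : B.u ≤ x) (hv : x ≤ B.v) : R.Meets x :=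
  ⟨h.1.trans hu, hv.trans h.2⟩

lemma Apart.beside (hB : B.Apart B') (h : B'.Inside R) : B.Beside R := by
  rcases hB with hB | hB
  exacts [Or.inr (hB.trans h.1.le), Or.inl (h.2.1.le.trans hB)]

namespace Within

lemma spans (hB : B.Within B') (h : B'.Spans R) : B.Spans R :=
  ⟨h.1.trans hB.1, hB.2.1.trans h.2⟩

lemma beside (hB : B.Within B') (h : B'.Beside R) : B.Beside R := by
  rcases h with h | h
  exacts [Or.inl (h.trans hB.1), Or.inr (hB.2.1.trans h)]

lemma compatible (hB : B.Within B') (h : B'.Compatible R) : B.Compatible R := by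
  rcases h with h | h | h
  · exact Or.inl (hB.beside h)
  · exact Or.inr (Or.inl ⟨hB.spans h.1, hB.2.2.2.trans h.2⟩)
  · exact Or.inr (Or.inr ⟨hB.spans h.1, h.2.trans hB.2.2.1⟩)

lemma inside (hB : B.Within B') (h : B.Inside R) : B'.Inside R :=
  ⟨hB.1.trans_lt h.1, h.2.1.trans_le hB.2.1, hB.2.2.1.trans_lt h.2.2.1, h.2.2.2.trans_le hB.2.2.2⟩

end Within

variable (B : Box) (m : ℕ) {s s' : Side} {j k : ℕ}

noncomputable def center : ℝ := (B.u + B.v) / 2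

noncomputable def step : ℝ := (B.v - B.u) / (2 * (m + 1))

noncomputable def rise : ℝ := (B.y₁ - B.y₀) / (m + 2)

noncomputable def fanTop (k : ℕ) : ℝ := B.y₀ + (k + 1) * B.rise m

lemma step_pos : 0 < B.step m :=
  div_pos (sub_pos.2 B.u_lt_v) (by positivity)

lemma rise_pos : 0 < B.rise m :=
  div_pos (sub_pos.2 B.y₀_lt_y₁) (by positivity)

lemma u_eq_lo (s : Side) : B.u = s.lo B.center (-((m + 1) * B.step m)) ((m + 1) * B.step m) := by
  rw [Side.lo_neg_self, center, step]
  field_simp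
  ring

lemma v_eq_hi (s : Side) : B.v = s.hi B.center (-((m + 1) * B.step m)) ((m + 1) * B.step m) := by
  rw [Side.hi_neg_self, center, step]
  field_simp
  ring

lemma center_mem : B.u < B.center ∧ B.center < B.v := by
  have := B.u_lt_v
  constructor <;> rw [center] <;> linarith

variable {B m}

lemma fanTop_strictMono : StrictMono (B.fanTop m) := fun j k h => by
  have : (j : ℝ) < k := by exact_mod_cast h
  unfold fanTop
  nlinarith [B.rise_pos m]

lemma y₀_lt_fanTop : B.y₀ < B.fanTop m k := by
  unfold fanTop
  nlinarith [B.rise_pos m]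

lemma fanTop_lt_y₁ (hk : k ≤ m) : B.fanTop m k < B.y₁ := by
  have : (k : ℝ) ≤ m := by exact_mod_cast hk
  have : B.y₁ = B.y₀ + (m + 2) * B.rise m := by rw [rise]; field_simp; ring
  unfold fanTop
  nlinarith [B.rise_pos m]

variable (B m)

noncomputable def fan (s : Side) (k : ℕ) : BRect where
  l := s.lo B.center 0 ((k + 1) * B.step m)
  r := s.hi B.center 0 ((k + 1) * B.step m)
  t := B.fanTop m k
  hlr := s.lo_le_hi (by have := B.step_pos m; positivity)

noncomputable def slot (s : Side) (k : ℕ) : Box where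
  u := s.lo B.center (k * B.step m) ((k + 1) * B.step m)
  v := s.hi B.center (k * B.step m) ((k + 1) * B.step m)
  y₀ := B.fanTop m k
  y₁ := B.fanTop m (k + 1)
  u_lt_v := s.lo_lt_hi (by nlinarith [B.step_pos m])
  y₀_lt_y₁ := fanTop_strictMono (Nat.lt_succ_self k)

variable {B m}

lemma inside_fan (hk : k < m) : B.Inside (B.fan m s k) := by
  have hw := B.step_pos m
  have hkm : (k : ℝ) + 1 < m + 1 := by exact_mod_cast Nat.succ_lt_succ hk
  refine ⟨?_, ?_, y₀_lt_fanTop, fanTop_lt_y₁ hk.le⟩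
  · rw [B.u_eq_lo m s]
    exact s.lo_lt_lo (by nlinarith) (by nlinarith)
  · rw [B.v_eq_hi m s]
    exact s.hi_lt_hi (by nlinarith) (by nlinarith)

lemma slot_within (hk : k < m) : (B.slot m s k).Within B := by
  have hw := B.step_pos m
  have hkm : (k : ℝ) + 1 ≤ m + 1 := by exact_mod_cast Nat.succ_le_succ hk.le
  refine ⟨?_, ?_, y₀_lt_fanTop.le, (fanTop_lt_y₁ hk).le⟩
  · rw [B.u_eq_lo m s]
    exact s.lo_le_lo (by nlinarith) (by nlinarith)
  · rw [B.v_eq_hi m s]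
    exact s.hi_le_hi (by nlinarith) (by nlinarith)

lemma slot_spans_fan (h : j ≤ k) : (B.slot m s j).Spans (B.fan m s k) := by
  have hw := B.step_pos m
  have hjk : (j : ℝ) ≤ k := by exact_mod_cast h
  exact ⟨s.lo_le_lo (by positivity) (by nlinarith), s.hi_le_hi (by positivity) (by nlinarith)⟩

lemma slot_beside_fan_of_lt (h : k < j) : (B.slot m s j).Beside (B.fan m s k) := by
  have hkj : (k : ℝ) + 1 ≤ j := by exact_mod_cast h
  exact s.separated_of_le (by nlinarith [B.step_pos m])

lemma slot_beside_fan_of_ne (h : s' ≠ s) : (B.slot m s j).Beside (B.fan m s' k) :=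
  Side.separated_of_ne h (by simp only [zero_add]; have := B.step_pos m; positivity)

lemma slot_apart (h : (s, j) ≠ (s', k)) : (B.slot m s j).Apart (B.slot m s' k) := by
  have hw := B.step_pos m
  by_cases hs : s = s'
  · subst hs
    have hjk : j ≠ k := fun hjk => h (by rw [hjk])
    rcases hjk.lt_or_gt with hjk | hjk
    · have : (j : ℝ) + 1 ≤ k := by exact_mod_cast hjk
      exact s.separated_of_le (by nlinarith)
    · have : (k : ℝ) + 1 ≤ j := by exact_mod_cast hjk
      exact (s.separated_of_le (by nlinarith)).symm
  · exact Side.separated_of_ne hs (by positivity)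

lemma fan_meets_center : (B.fan m s k).Meets B.center :=
  s.lo_le_self_le_hi (by have := B.step_pos m; positivity)

lemma not_meets_center_of_inside_slot {R : BRect} (h : (B.slot m s k).Inside R) :
    ¬R.Meets B.center := by
  rintro ⟨hl, hr⟩
  rcases s.hi_le_self_or_self_le_lo (c := B.center) (q := (k + 1) * B.step m)
    (by have := B.step_pos m; positivity : 0 ≤ (k : ℝ) * B.step m) with hc | hc
  · exact (h.2.1.trans_le hc).not_ge hr
  · exact (hc.trans_lt h.1).not_ge hl

lemma fan_injective : Function.Injective (B.fan m s) :=
  fun _ _ h => fanTop_strictMono.injective (congrArg BRect.t h)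

lemma fan_ne_fan (h : s ≠ s') : B.fan m s j ≠ B.fan m s' k := fun he => by
  have := congrArg BRect.l he
  have hw := B.step_pos m
  cases s <;> cases s' <;> simp only [ne_eq, not_true_eq_false] at h <;>
    simp only [fan, Side.lo] at this <;> nlinarith

variable (B m) in
noncomputable def fans : Finset BRect :=
  ({.left, .right} : Finset Side).biUnion fun s => (range (s.count m)).image (B.fan m s)

lemma mem_fans {R : BRect} : R ∈ B.fans m ↔ ∃ s k, k < s.count m ∧ B.fan m s k = R := by
  simp [fans, Side.exists_iff]

lemma card_fans : #(B.fans m) = m := by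
  rw [fans, card_biUnion, sum_pair (by decide), card_image_of_injective _ fan_injective,
    card_image_of_injective _ fan_injective, card_range, card_range,
    Side.count_left_add_count_right]
  intro s _ s' _ hs
  simp only [Function.onFun, disjoint_left, mem_image]
  rintro _ ⟨j, -, rfl⟩ ⟨k, -, h⟩
  exact fan_ne_fan hs h.symm

end Box

noncomputable def gadget : ℕ → ℕ → Box → Finset BRect
  | 0, _, _ => ∅
  | n + 1, m, B => ({.left, .right} : Finset Side).biUnion fun s =>
      (range (s.count m)).biUnion fun k =>
        insert (B.fan m s k) (gadget n (s.subSize m k) (B.slot m s k))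

section Gadget

variable {n m j : ℕ} {B : Box} {s : Side} {R : BRect}

lemma mem_gadget_succ : R ∈ gadget (n + 1) m B ↔ ∃ s k, k < s.count m ∧
    (R = B.fan m s k ∨ R ∈ gadget n (s.subSize m k) (B.slot m s k)) := by
  simp [gadget, Side.exists_iff]

lemma fans_subset_gadget : B.fans m ⊆ gadget (n + 1) m B := fun R hR => by
  obtain ⟨s, k, hk, rfl⟩ := Box.mem_fans.1 hR
  exact mem_gadget_succ.2 ⟨s, k, hk, Or.inl rfl⟩

lemma gadget_slot_subset (hj : j < s.count m) :
    gadget n (s.subSize m j) (B.slot m s j) ⊆ gadget (n + 1) m B :=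
  fun _ hR => mem_gadget_succ.2 ⟨s, j, hj, Or.inr hR⟩

lemma inside_of_mem_gadget (hR : R ∈ gadget n m B) : B.Inside R := by
  induction n generalizing m B with
  | zero => simp [gadget] at hR
  | succ n ih =>
    obtain ⟨s, k, hk, rfl | hR⟩ := mem_gadget_succ.1 hR
    · exact Box.inside_fan (hk.trans_le (s.count_le m))
    · exact (Box.slot_within (hk.trans_le (s.count_le m))).inside (ih hR)

lemma beside_slot_of_mem_gadget (hR : R ∈ gadget (n + 1) m B)
    (hsub : R ∉ gadget n (s.subSize m j) (B.slot m s j))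
    (hfan : ∀ k, j ≤ k → k < s.count m → R ≠ B.fan m s k) :
    (B.slot m s j).Beside R := by
  obtain ⟨s', k, hk, rfl | hR⟩ := mem_gadget_succ.1 hR
  · by_cases hs : s' = s
    · subst hs
      exact Box.slot_beside_fan_of_lt (not_le.1 fun hjk => hfan k hjk hk rfl)
    · exact Box.slot_beside_fan_of_ne hs
  · refine Box.Apart.beside (Box.slot_apart ?_) (inside_of_mem_gadget hR)
    rintro ⟨⟩
    exact hsub hR

variable {F : Finset BRect}

lemma mem_slot_cases (hF : ∀ R ∈ F, R ∉ gadget (n + 1) m B → B.Compatible R)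
    (hj : j < s.count m) (hR : R ∈ F) :
    R ∈ gadget n (s.subSize m j) (B.slot m s j) ∨
      (∃ k, j ≤ k ∧ k < s.count m ∧ R = B.fan m s k) ∨
      (B.slot m s j).Beside R ∨ B.Above R ∨ B.Below R := by
  by_cases hRG : R ∈ gadget (n + 1) m B
  · by_cases hsub : R ∈ gadget n (s.subSize m j) (B.slot m s j)
    · exact Or.inl hsub
    by_cases hfan : ∃ k, j ≤ k ∧ k < s.count m ∧ R = B.fan m s k
    · exact Or.inr (Or.inl hfan)
    exact Or.inr (Or.inr (Or.inl (beside_slot_of_mem_gadget hRG hsub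
      fun k hjk hk he => hfan ⟨k, hjk, hk, he⟩)))
  · rcases hF R hR hRG with hbes | hA | hB
    · exact Or.inr (Or.inr (Or.inl
        ((Box.slot_within (hj.trans_le (s.count_le m))).beside hbes)))
    · exact Or.inr (Or.inr (Or.inr (Or.inl hA)))
    · exact Or.inr (Or.inr (Or.inr (Or.inr hB)))

lemma filter_slot_spans (hGF : gadget (n + 1) m B ⊆ F)
    (hF : ∀ R ∈ F, R ∉ gadget (n + 1) m B → B.Compatible R) (hj : j < s.count m) :
    F.filter (B.slot m s j).Spans = F.filter B.Spans ∪ (Ico j (s.count m)).image (B.fan m s) := by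
  ext R
  simp only [mem_union, mem_filter, mem_image, mem_Ico]
  constructor
  · rintro ⟨hRF, hR⟩
    rcases mem_slot_cases hF hj hRF with hsub | ⟨k, hjk, hk, rfl⟩ | hbes | hA | hB
    · exact absurd hR (inside_of_mem_gadget hsub).not_spans
    · exact Or.inr ⟨k, ⟨hjk, hk⟩, rfl⟩
    · exact absurd hR hbes.not_spans
    · exact Or.inl ⟨hRF, hA.1⟩
    · exact Or.inl ⟨hRF, hB.1⟩
  · rintro (⟨hRF, hR⟩ | ⟨k, ⟨hjk, hk⟩, rfl⟩)
    · exact ⟨hRF, (Box.slot_within (hj.trans_le (s.count_le m))).spans hR⟩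
    · exact ⟨hGF (fans_subset_gadget (Box.mem_fans.2 ⟨s, k, hk, rfl⟩)), Box.slot_spans_fan hjk⟩

lemma filter_slot_above (hGF : gadget (n + 1) m B ⊆ F)
    (hF : ∀ R ∈ F, R ∉ gadget (n + 1) m B → B.Compatible R) (hj : j < s.count m) :
    F.filter (B.slot m s j).Above = F.filter B.Above ∪ (Ioo j (s.count m)).image (B.fan m s) := by
  ext R
  simp only [mem_union, mem_filter, mem_image, mem_Ioo]
  constructor
  · rintro ⟨hRF, hR, htop⟩
    rcases mem_slot_cases hF hj hRF with hsub | ⟨k, hjk, hk, rfl⟩ | hbes | hA | hB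
    · exact absurd hR (inside_of_mem_gadget hsub).not_spans
    · rcases hjk.eq_or_lt with rfl | hjk
      · exact absurd htop (Box.fanTop_strictMono (Nat.lt_succ_self j)).not_ge
      · exact Or.inr ⟨k, ⟨hjk, hk⟩, rfl⟩
    · exact absurd hR hbes.not_spans
    · exact Or.inl ⟨hRF, hA⟩
    · exact absurd (htop.trans hB.2) Box.y₀_lt_fanTop.not_ge
  · rintro (⟨hRF, hA⟩ | ⟨k, ⟨hjk, hk⟩, rfl⟩)
    · have hwithin := Box.slot_within (s := s) (B := B) (hj.trans_le (s.count_le m))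
      exact ⟨hRF, hwithin.spans hA.1, hwithin.2.2.2.trans hA.2⟩
    · exact ⟨hGF (fans_subset_gadget (Box.mem_fans.2 ⟨s, k, hk, rfl⟩)),
        Box.slot_spans_fan hjk.le, Box.fanTop_strictMono.monotone hjk⟩

lemma card_filter_slot_spans (hGF : gadget (n + 1) m B ⊆ F)
    (hF : ∀ R ∈ F, R ∉ gadget (n + 1) m B → B.Compatible R) (hj : j < s.count m) :
    #(F.filter (B.slot m s j).Spans) = #(F.filter B.Spans) + (s.count m - j) := by
  rw [filter_slot_spans hGF hF hj, card_union_of_disjoint,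
    card_image_of_injective _ Box.fan_injective, Nat.card_Ico]
  refine disjoint_left.2 fun R hR hR' => ?_
  obtain ⟨k, hk, rfl⟩ := mem_image.1 hR'
  exact (Box.inside_fan ((mem_Ico.1 hk).2.trans_le (s.count_le m))).not_spans (mem_filter.1 hR).2

lemma card_filter_slot_above (hGF : gadget (n + 1) m B ⊆ F)
    (hF : ∀ R ∈ F, R ∉ gadget (n + 1) m B → B.Compatible R) (hj : j < s.count m) :
    #(F.filter (B.slot m s j).Above) = #(F.filter B.Above) + (s.count m - j - 1) := by
  rw [filter_slot_above hGF hF hj, card_union_of_disjoint,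
    card_image_of_injective _ Box.fan_injective, Nat.card_Ioo]
  refine disjoint_left.2 fun R hR hR' => ?_
  obtain ⟨k, hk, rfl⟩ := mem_image.1 hR'
  exact (Box.inside_fan ((mem_Ioo.1 hk).2.trans_le (s.count_le m))).not_spans (mem_filter.1 hR).2.1

lemma compatible_slot (hF : ∀ R ∈ F, R ∉ gadget (n + 1) m B → B.Compatible R)
    (hj : j < s.count m) :
    ∀ R ∈ F, R ∉ gadget n (s.subSize m j) (B.slot m s j) → (B.slot m s j).Compatible R := by
  intro R hRF hsub
  have hwithin := Box.slot_within (s := s) (B := B) (hj.trans_le (s.count_le m))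
  rcases mem_slot_cases hF hj hRF with hsub' | ⟨k, hjk, -, rfl⟩ | hbes | hA | hB
  · exact absurd hsub' hsub
  · rcases hjk.eq_or_lt with rfl | hjk
    · exact Or.inr (Or.inr ⟨Box.slot_spans_fan le_rfl, le_rfl⟩)
    · exact Or.inr (Or.inl ⟨Box.slot_spans_fan hjk.le, Box.fanTop_strictMono.monotone hjk⟩)
  · exact Or.inl hbes
  · exact hwithin.compatible (Or.inr (Or.inl hA))
  · exact hwithin.compatible (Or.inr (Or.inr hB))

lemma filter_covers_center (hGF : gadget (n + 1) m B ⊆ F)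
    (hF : ∀ R ∈ F, R ∉ gadget (n + 1) m B → B.Compatible R) :
    F.filter (fun R => R.covers (B.center, B.fanTop m 0)) = F.filter B.Above ∪ B.fans m := by
  ext R
  simp only [mem_union, mem_filter, BRect.covers_iff]
  constructor
  · rintro ⟨hRF, hmeet, hy⟩
    by_cases hRG : R ∈ gadget (n + 1) m B
    · obtain ⟨s, k, hk, rfl | hsub⟩ := mem_gadget_succ.1 hRG
      · exact Or.inr (Box.mem_fans.2 ⟨s, k, hk, rfl⟩)
      · exact absurd hmeet (Box.not_meets_center_of_inside_slot (inside_of_mem_gadget hsub))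
    · rcases hF R hRF hRG with hbes | hA | hB
      · exact absurd hmeet (hbes.not_meets B.center_mem.1 B.center_mem.2)
      · exact Or.inl ⟨hRF, hA⟩
      · exact absurd (hy.trans hB.2) Box.y₀_lt_fanTop.not_ge
  · rintro (⟨hRF, hA⟩ | hfan)
    · exact ⟨hRF, hA.1.meets B.center_mem.1.le B.center_mem.2.le,
        (Box.fanTop_lt_y₁ (Nat.zero_le m)).le.trans hA.2⟩
    · obtain ⟨s, k, hk, rfl⟩ := Box.mem_fans.1 hfan
      exact ⟨hGF (fans_subset_gadget hfan), Box.fan_meets_center,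
        Box.fanTop_strictMono.monotone (Nat.zero_le k)⟩

lemma depth_center (hGF : gadget (n + 1) m B ⊆ F)
    (hF : ∀ R ∈ F, R ∉ gadget (n + 1) m B → B.Compatible R) :
    depth F (B.center, B.fanTop m 0) = #(F.filter B.Above) + m := by
  rw [depth, filter_covers_center hGF hF, card_union_of_disjoint, Box.card_fans]
  refine disjoint_left.2 fun R hR hR' => ?_
  obtain ⟨s, k, hk, rfl⟩ := Box.mem_fans.1 hR'
  exact (Box.inside_fan (hk.trans_le (s.count_le m))).not_spans (mem_filter.1 hR).2.1

end Gadget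

namespace Box

variable (B : Box) (n m : ℕ) (G F H : Finset BRect)

def Stabbed : Prop :=
  (∃ R ∈ H, B.Above R) ∨
    ∃ x, B.u < x ∧ x < B.v ∧
      (#(F.filter (·.Meets x)) : ℝ) ≤ #(F.filter B.Spans) + (1 - 2⁻¹ ^ n) * m + n ∧
      n ≤ #((H ∩ G).filter (·.Meets x))

/-- `F` is the whole family as seen from `B`; the rectangles above `B` raise the depth throughout
`B` by `#(F.filter B.Above)`. -/
def Forces : Prop :=
  ∀ F H : Finset BRect, G ⊆ F → (∀ R ∈ F, R ∉ G → B.Compatible R) → H ⊆ F →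
    (∀ p, depth F p = #(F.filter B.Above) + m → ∃ R ∈ H, R.covers p) → B.Stabbed n m G F H

end Box

lemma one_sub_inv_two_pow_mul_le_succ (n : ℕ) {p q j : ℝ} (hj : 0 ≤ j) (hpq : p ≤ q + 1) :
    (p - j) + (1 - 2⁻¹ ^ n) * (j + 1 + q) + n ≤ (1 - 2⁻¹ ^ (n + 1)) * (p + q) + (n + 1) := by
  have hε : (0 : ℝ) ≤ 2⁻¹ ^ n := by positivity
  rw [pow_succ]
  nlinarith [mul_nonneg hε (by linarith : 0 ≤ 2 * j + 2 + q - p)]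

section Forces

variable {n m j : ℕ} {B : Box} {s : Side} {F H : Finset BRect}

lemma forces_gadget_zero : B.Forces 0 m (gadget 0 m B) := by
  intro F H _ hF _ _
  refine Or.inr ⟨B.center, B.center_mem.1, B.center_mem.2, ?_, Nat.zero_le _⟩
  have : F.filter (·.Meets B.center) ⊆ F.filter B.Spans := by
    intro R hR
    obtain ⟨hRF, hmeet⟩ := mem_filter.1 hR
    refine mem_filter.2 ⟨hRF, ?_⟩
    rcases hF R hRF (notMem_empty R) with hbes | hA | hB
    · exact absurd hmeet (hbes.not_meets B.center_mem.1 B.center_mem.2)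
    · exact hA.1
    · exact hB.1
  simp only [pow_zero, sub_self, zero_mul, add_zero, CharP.cast_eq_zero]
  exact_mod_cast card_le_card this

lemma stabbed_of_widest_fan_mem
    (ih : (B.slot m s j).Forces n (s.subSize m j) (gadget n (s.subSize m j) (B.slot m s j)))
    (hGF : gadget (n + 1) m B ⊆ F) (hF : ∀ R ∈ F, R ∉ gadget (n + 1) m B → B.Compatible R)
    (hHF : H ⊆ F) (hhit : ∀ p, depth F p = #(F.filter B.Above) + m → ∃ R ∈ H, R.covers p)
    (hj : j < s.count m) (hjH : B.fan m s j ∈ H)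
    (hmax : ∀ k, j < k → k < s.count m → B.fan m s k ∉ H) :
    B.Stabbed (n + 1) m (gadget (n + 1) m B) F H := by
  have hsub := gadget_slot_subset (n := n) (B := B) hj
  have hcount := s.count_le m
  rcases ih F H (hsub.trans hGF) (compatible_slot hF hj) hHF fun p hp => hhit p (by
      rw [hp, card_filter_slot_above hGF hF hj, Side.subSize]; omega) with
    ⟨R, hRH, hR⟩ | ⟨x, hux, hxv, hFx, hHx⟩
  · have : R ∈ F.filter B.Above ∪ (Ioo j (s.count m)).image (B.fan m s) := by
      rw [← filter_slot_above hGF hF hj]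
      exact mem_filter.2 ⟨hHF hRH, hR⟩
    rcases mem_union.1 this with hA | hfan
    · exact Or.inl ⟨R, hRH, (mem_filter.1 hA).2⟩
    · obtain ⟨k, hk, rfl⟩ := mem_image.1 hfan
      exact absurd hRH (hmax k (mem_Ioo.1 hk).1 (mem_Ioo.1 hk).2)
  have hwithin := Box.slot_within (s := s) (B := B) (hj.trans_le hcount)
  refine Or.inr ⟨x, hwithin.1.trans_lt hux, hxv.trans_le hwithin.2.1, ?_, ?_⟩
  · have key := one_sub_inv_two_pow_mul_le_succ n (p := s.count m)
      (q := ((m - s.count m : ℕ) : ℝ)) (Nat.cast_nonneg j) (by exact_mod_cast s.count_le_sub_add_one m)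
    have hm : (m : ℝ) = s.count m + ((m - s.count m : ℕ) : ℝ) := by
      rw [Nat.cast_sub hcount]; ring
    rw [card_filter_slot_spans hGF hF hj, Side.subSize] at hFx
    rw [hm]
    push_cast [Nat.cast_sub hj.le] at hFx ⊢
    linarith
  · have hjslot := Box.slot_spans_fan (B := B) (m := m) (s := s) (le_refl j)
    have hnot : B.fan m s j ∉ (H ∩ gadget n (s.subSize m j) (B.slot m s j)).filter (·.Meets x) :=
      fun h => (inside_of_mem_gadget (mem_inter.1 (mem_filter.1 h).1).2).not_spans hjslot
    calc n + 1 ≤ #(insert (B.fan m s j)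
          ((H ∩ gadget n (s.subSize m j) (B.slot m s j)).filter (·.Meets x))) := by
          rw [card_insert_of_notMem hnot]; omega
      _ ≤ _ := card_le_card (insert_subset
          (mem_filter.2 ⟨mem_inter.2 ⟨hjH, fans_subset_gadget (Box.mem_fans.2 ⟨s, j, hj, rfl⟩)⟩,
            hjslot.meets hux.le hxv.le⟩)
          (filter_subset_filter _ (inter_subset_inter_left hsub)))

lemma forces_gadget_succ
    (ih : ∀ s j,
      (B.slot m s j).Forces n (s.subSize m j) (gadget n (s.subSize m j) (B.slot m s j))) :
    B.Forces (n + 1) m (gadget (n + 1) m B) := by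
  intro F H hGF hF hHF hhit
  obtain ⟨R, hRH, hR⟩ := hhit _ (depth_center hGF hF)
  have : R ∈ F.filter B.Above ∪ B.fans m := by
    rw [← filter_covers_center hGF hF]
    exact mem_filter.2 ⟨hHF hRH, hR⟩
  rcases mem_union.1 this with hA | hfan
  · exact Or.inl ⟨R, hRH, (mem_filter.1 hA).2⟩
  obtain ⟨s, k, hk, rfl⟩ := Box.mem_fans.1 hfan
  obtain ⟨j, hj, hmax⟩ := ((range (s.count m)).filter (B.fan m s · ∈ H)).exists_max_image id
    ⟨k, mem_filter.2 ⟨mem_range.2 hk, hRH⟩⟩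
  rw [mem_filter, mem_range] at hj
  exact stabbed_of_widest_fan_mem (ih s j) hGF hF hHF hhit hj.1 hj.2
    fun k hjk hk hkH => (hmax k (mem_filter.2 ⟨mem_range.2 hk, hkH⟩)).not_gt hjk

end Forces

theorem forces_gadget : ∀ n m (B : Box), B.Forces n m (gadget n m B)
  | 0, _, _ => forces_gadget_zero
  | n + 1, _, _ => forces_gadget_succ fun _ _ => forces_gadget n _ _

lemma one_sub_inv_two_pow_mul_add_le {h d : ℕ} (hd : h * 2 ^ (h + 1) ≤ d) :
    (1 - 2⁻¹ ^ h) * (d : ℝ) + h ≤ (1 - 2⁻¹ ^ (h + 1)) * d := by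
  have hd' : (h : ℝ) * 2 ^ (h + 1) ≤ d := by exact_mod_cast hd
  have : (h : ℝ) ≤ 2⁻¹ ^ (h + 1) * d :=
    calc (h : ℝ) = 2⁻¹ ^ (h + 1) * (h * 2 ^ (h + 1)) := by rw [inv_pow]; field_simp
      _ ≤ _ := by gcongr
  rw [pow_succ] at this ⊢
  linarith

/-- Bottomless rectangles do not admit shallow hitting sets: for every `h` there are
`r < 1` and `D` so that for all `d ≥ D` there is a family `F` such that every hitting
set `H` of the depth-`d` points of `F` has some vertical line `x = a` meeting at most
`⌈r·d⌉` rectangles of `F` but at least `h` rectangles of `H`. -/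
theorem no_shallow_hitting_sets (h : ℕ) :
    ∃ r : ℝ, r < 1 ∧ ∃ D : ℕ, 1 ≤ D ∧ ∀ d : ℕ, D ≤ d →
      ∃ F : Finset BRect, ∀ H ⊆ F,
        (∀ p : ℝ × ℝ, depth F p = d → ∃ R ∈ H, R.covers p) →
        ∃ a : ℝ,
          (((F.filter (fun R => R.l ≤ a ∧ a ≤ R.r)).card : ℤ) ≤ ⌈r * (d : ℝ)⌉) ∧
          h ≤ (H.filter (fun R => R.l ≤ a ∧ a ≤ R.r)).card := by
  refine ⟨1 - 2⁻¹ ^ (h + 1), sub_lt_self 1 (by positivity), h * 2 ^ (h + 1) + 1, le_add_self,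
    fun d hd => ⟨gadget h d ⟨0, 1, 0, 1, one_pos, one_pos⟩, fun H hHF hhit => ?_⟩⟩
  set B : Box := ⟨0, 1, 0, 1, one_pos, one_pos⟩
  have hspans : (gadget h d B).filter B.Spans = ∅ :=
    filter_false_of_mem fun R hR => (inside_of_mem_gadget hR).not_spans
  have habove : (gadget h d B).filter B.Above = ∅ :=
    filter_false_of_mem fun R hR hA => (inside_of_mem_gadget hR).not_spans hA.1
  rcases forces_gadget h d B _ H subset_rfl (fun R hR hR' => absurd hR hR') hHF
      (by simpa only [habove, card_empty, zero_add] using hhit) with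
    ⟨R, hRH, hA⟩ | ⟨x, -, -, hFx, hHx⟩
  · exact absurd hA.1 (inside_of_mem_gadget (hHF hRH)).not_spans
  refine ⟨x, ?_, hHx.trans (card_le_card (filter_subset_filter _ inter_subset_left))⟩
  rw [hspans, card_empty, Nat.cast_zero, zero_add] at hFx
  have := (hFx.trans (one_sub_inv_two_pow_mul_add_le (by omega))).trans (Int.le_ceil _)
  exact_mod_cast this
end

section
/- For all integers k ≥ 2 and m ≥ 2 there exists a finite family F of bottomless rectangles such that no colouring c : F → {1, …, k} simultaneously satisfies both of the following: (i) every point covered by at least m rectangles of F is covered by all k colours, and (ii) every point covered by at least 2 rectangles of F is covered by at least two distinct colours (i.e., no polychromatic k-colouring of F is proper). -/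
/-!
Give every node `s` of the complete binary tree of depth `m - 1` the bottomless rectangle of
height `|s|` over an interval `I s`, where the intervals of the two children of a node lie inside
the parent's interval and meet in a single point that no other interval of greater depth
contains. Just above depth `|v|`, that point of `v` is covered by exactly the two children of `v`,
so a proper colouring gives siblings different colours. Pick a colour `α` other than the root's
and walk down from the root, always to a child not coloured `α`, to a leaf `v`. At height `0`, a
point of `I v` outside the intervals of all non-ancestors of `v` is covered by the `m` rectangles
of the path and by no rectangle of colour `α`.
-/

open Set

namespace BottomlessTree

noncomputable section

/-- The intervals are the images of `[0, 1]` under compositions of the two contractions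
`step false` and `step true`, which map `[0, 1]` onto `[1/4, 1/2]` and `[1/2, 3/4]`: the two
children meet only at the image of `1/2`, and the image of `1/5` lies in no child. -/
def step (b : Bool) (y : ℝ) : ℝ := (y + cond b 2 1) / 4

def nodeMap : List Bool → ℝ → ℝ
  | [] => id
  | b :: s => step b ∘ nodeMap s

def nodeInterval (s : List Bool) : Set ℝ := nodeMap s '' Icc 0 1

/-- `core` is invariant under both steps, and each step maps it away from the image of `[0, 1]`
under the other step; this is what confines the nodes that can cover a point
`nodeMap v y` with `y ∈ core`. -/
def core : Set ℝ := Icc (1/5) (4/5)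

lemma step_injective (b : Bool) : Function.Injective (step b) := by
  intro y z h
  simpa [step] using h

lemma image_step_Icc (b : Bool) (a c : ℝ) : step b '' Icc a c = Icc (step b a) (step b c) := by
  have : step b = ((1/4 : ℝ) * · + cond b 2 1 / 4) := by
    funext y
    simp only [step]
    ring
  rw [this, image_affine_Icc' (by norm_num)]

lemma mapsTo_step (b : Bool) : MapsTo (step b) (Icc 0 1) (Icc (1/4) (3/4)) := by
  rintro y ⟨h₀, h₁⟩
  cases b <;> constructor <;> simp only [step, cond] <;> linarith

lemma Icc_subset_core : Icc (1/4 : ℝ) (3/4) ⊆ core := Icc_subset_Icc (by norm_num) (by norm_num)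

lemma core_subset_Icc : core ⊆ Icc 0 1 := Icc_subset_Icc (by norm_num) (by norm_num)

lemma step_ne_step {b c : Bool} (hbc : b ≠ c) {y z : ℝ} (hy : y ∈ core) (hz : z ∈ Icc 0 1) :
    step b y ≠ step c z := by
  obtain ⟨hy₀, hy₁⟩ := hy
  obtain ⟨hz₀, hz₁⟩ := hz
  cases b <;> cases c <;> simp only [ne_eq, not_true_eq_false] at hbc <;>
    simp only [step, cond] <;> intro h <;> linarith

lemma half_notMem_image_step_core (b : Bool) : (1/2 : ℝ) ∉ step b '' core := by
  rintro ⟨w, ⟨hw₀, hw₁⟩, hw⟩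
  cases b <;> simp only [step, cond] at hw <;> linarith

lemma mapsTo_nodeMap {S : Set ℝ} (hS : ∀ b, MapsTo (step b) S S) :
    ∀ s, MapsTo (nodeMap s) S S
  | [] => mapsTo_id S
  | b :: s => (hS b).comp (mapsTo_nodeMap hS s)

lemma mapsTo_nodeMap_core (s : List Bool) : MapsTo (nodeMap s) core core :=
  mapsTo_nodeMap (fun b => ((mapsTo_step b).mono_left core_subset_Icc).mono_right Icc_subset_core) s

lemma nodeMap_append (u v : List Bool) : nodeMap (u ++ v) = nodeMap u ∘ nodeMap v := by
  induction u with
  | nil => rfl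
  | cons b u ih => simp only [List.cons_append, nodeMap, ih, Function.comp_assoc]

lemma nodeInterval_cons (b : Bool) (s : List Bool) :
    nodeInterval (b :: s) = step b '' nodeInterval s :=
  image_comp _ _ _

lemma nodeInterval_append (u v : List Bool) :
    nodeInterval (u ++ v) = nodeMap u '' nodeInterval v := by
  rw [nodeInterval, nodeMap_append, image_comp, nodeInterval]

lemma nodeInterval_eq_Icc : ∀ s, nodeInterval s = Icc (nodeMap s 0) (nodeMap s 1)
  | [] => image_id _
  | b :: s => by rw [nodeInterval_cons, nodeInterval_eq_Icc s, image_step_Icc]; rfl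

lemma nodeInterval_subset_Icc (s : List Bool) : nodeInterval s ⊆ Icc 0 1 :=
  (mapsTo_nodeMap (fun b => (mapsTo_step b).mono_right
    (Icc_subset_core.trans core_subset_Icc)) s).image_subset

lemma nodeInterval_cons_subset (b : Bool) (s : List Bool) :
    nodeInterval (b :: s) ⊆ Icc (1/4) (3/4) := by
  rw [nodeInterval_cons]
  exact ((mapsTo_step b).mono_left (nodeInterval_subset_Icc s)).image_subset

lemma nodeInterval_antitone {u v : List Bool} (h : u <+: v) : nodeInterval v ⊆ nodeInterval u := by
  obtain ⟨t, rfl⟩ := h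
  rw [nodeInterval_append]
  exact image_mono (nodeInterval_subset_Icc t)

lemma prefix_or_eq_append_of_nodeMap_mem {v s : List Bool} {y : ℝ} (hy : y ∈ core)
    (h : nodeMap v y ∈ nodeInterval s) : s <+: v ∨ ∃ t, s = v ++ t ∧ y ∈ nodeInterval t := by
  induction s generalizing v with
  | nil => exact Or.inl List.nil_prefix
  | cons b s ih =>
    cases v with
    | nil => exact Or.inr ⟨b :: s, rfl, h⟩
    | cons c v =>
      rw [nodeInterval_cons] at h
      obtain ⟨z, hz, hzy⟩ := h
      obtain rfl : b = c := by
        by_contra hbc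
        exact step_ne_step (Ne.symm hbc) (mapsTo_nodeMap_core v hy)
          (nodeInterval_subset_Icc s hz) hzy.symm
      rcases ih (step_injective b hzy ▸ hz) with h | ⟨t, rfl, ht⟩
      · exact Or.inl (List.cons_prefix_cons.2 ⟨rfl, h⟩)
      · exact Or.inr ⟨t, rfl, ht⟩

lemma prefix_of_nodeMap_fifth_mem {v s : List Bool} (h : nodeMap v (1/5) ∈ nodeInterval s) :
    s <+: v := by
  rcases prefix_or_eq_append_of_nodeMap_mem (by norm_num [core]) h with h | ⟨_ | ⟨b, t⟩, rfl, ht⟩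
  · exact h
  · simp
  · have := (nodeInterval_cons_subset b t ht).1
    norm_num at this

lemma eq_concat_of_nodeMap_half_mem {v s : List Bool} (h : nodeMap v (1/2) ∈ nodeInterval s)
    (hlen : v.length < s.length) : ∃ b, s = v ++ [b] := by
  rcases prefix_or_eq_append_of_nodeMap_mem (by norm_num [core]) h with
    h | ⟨_ | ⟨b, _ | ⟨c, t⟩⟩, rfl, ht⟩
  · exact absurd h.length_le (by omega)
  · simp at hlen
  · exact ⟨b, rfl⟩
  · rw [nodeInterval_cons] at ht
    exact absurd (image_mono ((nodeInterval_cons_subset c t).trans Icc_subset_core) ht)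
      (half_notMem_image_step_core b)

lemma nodeMap_half_mem_concat (v : List Bool) (b : Bool) :
    nodeMap v (1/2) ∈ nodeInterval (v ++ [b]) := by
  rw [nodeInterval_append]
  refine mem_image_of_mem _ ?_
  rw [nodeInterval_eq_Icc]
  cases b <;> norm_num [nodeMap, step]

lemma nodeMap_fifth_mem_of_prefix {u v : List Bool} (h : u <+: v) :
    nodeMap v (1/5) ∈ nodeInterval u :=
  nodeInterval_antitone h (mem_image_of_mem _ (by norm_num))

def nodeRect (s : List Bool) : BRect :=
  ⟨nodeMap s 0, nodeMap s 1, s.length,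
    nonempty_Icc.1 (nodeInterval_eq_Icc s ▸ (nonempty_Icc.2 zero_le_one).image (nodeMap s))⟩

lemma covers_nodeRect_iff {s : List Bool} {p : ℝ × ℝ} :
    (nodeRect s).covers p ↔ p.1 ∈ nodeInterval s ∧ p.2 ≤ s.length := by
  rw [nodeInterval_eq_Icc]
  simp only [BRect.covers, nodeRect, mem_Icc, and_assoc]

lemma nodeRect_injective : Function.Injective nodeRect := by
  intro s s' h
  simp only [nodeRect, BRect.mk.injEq, Nat.cast_inj] at h
  obtain ⟨h₀, h₁, hlen⟩ := h
  have hmem : nodeMap s (1/5) ∈ nodeInterval s' := by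
    rw [nodeInterval_eq_Icc, ← h₀, ← h₁, ← nodeInterval_eq_Icc]
    exact mem_image_of_mem _ (by norm_num)
  exact ((prefix_of_nodeMap_fifth_mem hmem).eq_of_length hlen.symm).symm

def family (d : ℕ) : Finset BRect :=
  (List.finite_length_le Bool d).toFinset.map ⟨nodeRect, nodeRect_injective⟩

lemma mem_family {d : ℕ} {R : BRect} :
    R ∈ family d ↔ ∃ s : List Bool, s.length ≤ d ∧ nodeRect s = R := by
  simp [family]

lemma colour_concat_ne {β : Type*} {d : ℕ} {c : BRect → β}
    (hproper : ∀ p : ℝ × ℝ, (∃ G ⊆ family d, 2 ≤ G.card ∧ ∀ R ∈ G, R.covers p) →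
      ∃ R₁ ∈ family d, ∃ R₂ ∈ family d, R₁.covers p ∧ R₂.covers p ∧ c R₁ ≠ c R₂)
    {v : List Bool} (hv : v.length < d) :
    c (nodeRect (v ++ [false])) ≠ c (nodeRect (v ++ [true])) := by
  classical
  have hcovers (s : List Bool) :
      (nodeRect s).covers (nodeMap v (1/2), v.length + 1) ↔ ∃ b, s = v ++ [b] := by
    rw [covers_nodeRect_iff]
    constructor
    · rintro ⟨hmem, hlen⟩
      simp only at hlen
      exact eq_concat_of_nodeMap_half_mem hmem (Nat.lt_of_succ_le (by exact_mod_cast hlen))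
    · rintro ⟨b, rfl⟩
      exact ⟨nodeMap_half_mem_concat v b, by simp⟩
  have hmem (b : Bool) : nodeRect (v ++ [b]) ∈ family d :=
    mem_family.2 ⟨_, by simp; omega, rfl⟩
  have hpair : nodeRect (v ++ [false]) ≠ nodeRect (v ++ [true]) :=
    nodeRect_injective.ne (by simp)
  obtain ⟨R₁, h₁, R₂, h₂, hc₁, hc₂, hne⟩ := hproper (nodeMap v (1/2), v.length + 1)
    ⟨{nodeRect (v ++ [false]), nodeRect (v ++ [true])},
      Finset.insert_subset_iff.2 ⟨hmem _, Finset.singleton_subset_iff.2 (hmem _)⟩,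
      (Finset.card_pair hpair).ge, by
        simp only [Finset.mem_insert, Finset.mem_singleton, forall_eq_or_imp, forall_eq]
        exact ⟨(hcovers _).2 ⟨false, rfl⟩, (hcovers _).2 ⟨true, rfl⟩⟩⟩
  intro heq
  have hcolour : ∀ R ∈ family d, R.covers (nodeMap v (1/2), v.length + 1) →
      c R = c (nodeRect (v ++ [false])) := by
    intro R hR hRp
    obtain ⟨s, -, rfl⟩ := mem_family.1 hR
    obtain ⟨_ | _, rfl⟩ := (hcovers s).1 hRp
    exacts [rfl, heq.symm]
  exact hne ((hcolour R₁ h₁ hc₁).trans (hcolour R₂ h₂ hc₂).symm)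

lemma exists_subset_family_covers (v : List Bool) :
    ∃ G ⊆ family v.length, v.length + 1 ≤ G.card ∧ ∀ R ∈ G, R.covers (nodeMap v (1/5), 0) := by
  classical
  refine ⟨(Finset.range (v.length + 1)).image (fun j => nodeRect (v.take j)), ?_, ?_, ?_⟩
  · intro R hR
    obtain ⟨j, -, rfl⟩ := Finset.mem_image.1 hR
    exact mem_family.2 ⟨v.take j, List.length_take_le' j v, rfl⟩
  · rw [Finset.card_image_of_injOn, Finset.card_range]
    intro i hi j hj hij
    have := congrArg List.length (nodeRect_injective hij)
    simp only [Finset.coe_range, mem_Iio] at hi hj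
    simpa [List.length_take, Nat.lt_succ_iff.1 hi, Nat.lt_succ_iff.1 hj] using this
  · intro R hR
    obtain ⟨j, -, rfl⟩ := Finset.mem_image.1 hR
    exact covers_nodeRect_iff.2 ⟨nodeMap_fifth_mem_of_prefix (List.take_prefix j v), by simp⟩

lemma exists_path_avoiding {β : Type*} (col : List Bool → β) (α : β) (hroot : col [] ≠ α) :
    ∀ d, (∀ v : List Bool, v.length < d → col (v ++ [false]) ≠ col (v ++ [true])) →
      ∃ v : List Bool, v.length = d ∧ ∀ u, u <+: v → col u ≠ α
  | 0, _ => ⟨[], rfl, fun u hu => by rwa [List.prefix_nil.1 hu]⟩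
  | d + 1, hchildren => by
    obtain ⟨v, rfl, hv⟩ := exists_path_avoiding col α hroot d
      fun v hv => hchildren v (by omega)
    obtain ⟨b, hb⟩ : ∃ b, col (v ++ [b]) ≠ α := by
      by_contra! h
      exact hchildren v (by omega) ((h false).trans (h true).symm)
    refine ⟨v ++ [b], by simp, fun u hu => ?_⟩
    rcases List.prefix_concat_iff.1 hu with rfl | hu
    exacts [hb, hv u hu]

end

end BottomlessTree

open BottomlessTree

theorem no_proper_polychromatic_general (k m : ℕ) (hk : 2 ≤ k) :
    ∃ F : Finset BRect, ∀ c : BRect → Fin k,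
      ¬ ((∀ p : ℝ × ℝ, (∃ G ⊆ F, m ≤ G.card ∧ ∀ R ∈ G, R.covers p) →
            ∀ i : Fin k, ∃ R ∈ F, R.covers p ∧ c R = i) ∧
         (∀ p : ℝ × ℝ, (∃ G ⊆ F, 2 ≤ G.card ∧ ∀ R ∈ G, R.covers p) →
            ∃ R₁ ∈ F, ∃ R₂ ∈ F, R₁.covers p ∧ R₂.covers p ∧ c R₁ ≠ c R₂)) := by
  refine ⟨family (m - 1), fun c ⟨hpoly, hproper⟩ => ?_⟩
  have : Nontrivial (Fin k) := Fin.nontrivial_iff_two_le.2 hk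
  obtain ⟨α, hα⟩ := exists_ne (c (nodeRect []))
  obtain ⟨v, hv, hvα⟩ := exists_path_avoiding (c ∘ nodeRect) α hα.symm (m - 1)
    fun v hv => colour_concat_ne hproper hv
  obtain ⟨G, hGF, hGcard, hGcov⟩ := exists_subset_family_covers v
  obtain ⟨R, hR, hRcov, hRα⟩ := hpoly _ ⟨G, hv ▸ hGF, by omega, hGcov⟩ α
  obtain ⟨s, -, rfl⟩ := mem_family.1 hR
  exact hvα s (prefix_of_nodeMap_fifth_mem (covers_nodeRect_iff.1 hRcov).1) hRα

/-- There is a family of bottomless rectangles no `k`-colouring of which is both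
polychromatic with threshold `m` and proper on `2`-fold covered points. -/
theorem no_proper_polychromatic (k m : ℕ) (hk : 2 ≤ k) (hm : 2 ≤ m) :
    ∃ F : Finset BRect, ∀ c : BRect → Fin k,
      ¬ ((∀ p : ℝ × ℝ, (∃ G ⊆ F, m ≤ G.card ∧ ∀ R ∈ G, R.covers p) →
            ∀ i : Fin k, ∃ R ∈ F, R.covers p ∧ c R = i) ∧
         (∀ p : ℝ × ℝ, (∃ G ⊆ F, 2 ≤ G.card ∧ ∀ R ∈ G, R.covers p) →
            ∃ R₁ ∈ F, ∃ R₂ ∈ F, R₁.covers p ∧ R₂.covers p ∧ c R₁ ≠ c R₂)) :=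
  no_proper_polychromatic_general k m hk
end

section
/- For every integer k ≥ 1 there exists a finite family F of bottomless rectangles, each of width 1 (i.e. r − l = 1) and containing no two rectangles forming a tower or a nested pair, such that for every colouring c : F → {1, …, k} there exist a point p ∈ ℝ² covered by at least 2·⌊(2k−1)/3⌋ rectangles of F and a colour i ∈ {1, …, k} such that no rectangle of F covering p has colour i. (Hence for unit-width bottomless rectangles m_k* ≥ 2·⌊(2k−1)/3⌋ + 1.) -/
/-!
Take three stacks of `q = ⌊(2k-1)/3⌋` unit rectangles each, over `[0, 1]`, `[1/4, 5/4]` and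
`[1/2, 3/2]`, with tops in `[2, 3)`, `[1, 2)` and `[3, 4)` respectively. Each of the points
`(1/4, 0)`, `(5/4, 0)`, `(1/2, 2)` is covered by exactly two of the stacks, a different pair each
time. If all three points saw every colour, each colour would occur in at least two stacks,
forcing `2k ≤ 3q ≤ 2k - 1`. Equal widths exclude towers and nested pairs.
-/

open Finset

theorem two_mul_card_le_of_union_eq_univ {α : Type*} [Fintype α] [DecidableEq α]
    {A B C : Finset α} (hAB : A ∪ B = univ) (hBC : B ∪ C = univ) (hAC : A ∪ C = univ) :
    2 * Fintype.card α ≤ #A + #B + #C := by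
  have hsum := card_union_add_card_inter A B
  have hC : (A ∩ B)ᶜ ⊆ C := fun x hx => by
    rw [mem_compl, mem_inter, not_and_or] at hx
    rcases hx with hxA | hxB
    · exact (mem_union.1 (hAC ▸ mem_univ x)).resolve_left hxA
    · exact (mem_union.1 (hBC ▸ mem_univ x)).resolve_left hxB
  have hcompl := card_le_card hC
  rw [hAB, card_univ] at hsum
  rw [card_compl] at hcompl
  have := card_le_univ (A ∩ B)
  omega

theorem exists_notMem_image_union {α β : Type*} [DecidableEq α] [Fintype β] [DecidableEq β]
    (c : α → β) {A B C : Finset α} {q : ℕ} (hq : 3 * q < 2 * Fintype.card β)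
    (hA : #A ≤ q) (hB : #B ≤ q) (hC : #C ≤ q) :
    (∃ i, i ∉ (A ∪ B).image c) ∨ (∃ i, i ∉ (B ∪ C).image c) ∨ ∃ i, i ∉ (A ∪ C).image c := by
  by_contra! h
  obtain ⟨hAB, hBC, hAC⟩ := h
  simp only [image_union] at hAB hBC hAC
  have := two_mul_card_le_of_union_eq_univ (eq_univ_of_forall hAB) (eq_univ_of_forall hBC)
    (eq_univ_of_forall hAC)
  have := (card_image_le (s := A) (f := c)).trans hA
  have := (card_image_le (s := B) (f := c)).trans hB
  have := (card_image_le (s := C) (f := c)).trans hC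
  omega

theorem exists_subset_card_le_and_colour_notMem {α β : Type*} [DecidableEq β] {F S : Finset α}
    {P : α → Prop} [DecidablePred P] (hS : F.filter P = S) {m : ℕ} (hm : m ≤ #S) {c : α → β}
    {i : β} (hi : i ∉ S.image c) :
    (∃ G ⊆ F, m ≤ #G ∧ ∀ a ∈ G, P a) ∧ ∃ i, ∀ a ∈ F, P a → c a ≠ i := by
  subst hS
  exact ⟨⟨_, filter_subset _ _, hm, fun a ha => (mem_filter.1 ha).2⟩,
    i, fun a ha hPa hca => hi (mem_image.2 ⟨a, mem_filter.2 ⟨ha, hPa⟩, hca⟩)⟩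

theorem BRect.not_towerPair_of_width_eq {A B : BRect} (h : A.r - A.l = B.r - B.l) :
    ¬ TowerPair A B := by
  rintro (⟨h₁, h₂, -⟩ | ⟨h₁, h₂, -⟩) <;> linarith

theorem BRect.not_nestedPair_of_width_eq {A B : BRect} (h : A.r - A.l = B.r - B.l) :
    ¬ NestedPair A B := by
  rintro (⟨h₁, h₂, -⟩ | ⟨h₁, h₂, -⟩) <;> linarith

noncomputable instance : DecidableEq BRect := Classical.decEq _

def BRect.unit (l t : ℝ) : BRect := ⟨l, l + 1, t, by linarith⟩

noncomputable def BRect.stack (l t : ℝ) (q : ℕ) : Finset BRect :=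
  (range q).image fun i : ℕ => BRect.unit l (t + i / q)

namespace BRect

variable {l t : ℝ} {q : ℕ} {R : BRect}

theorem card_stack : #(stack l t q) = q := by
  rw [stack, card_image_of_injOn, card_range]
  intro i hi j _ hij
  have hq : (q : ℝ) ≠ 0 := by
    have := (mem_range.1 hi).pos
    positivity
  simpa only [unit, add_right_inj, div_left_inj' hq, Nat.cast_inj] using congrArg BRect.t hij

theorem mem_stack (hR : R ∈ stack l t q) : R.l = l ∧ R.r = l + 1 ∧ t ≤ R.t ∧ R.t < t + 1 := by
  obtain ⟨i, hi, rfl⟩ := mem_image.1 hR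
  have hiq : (i : ℝ) < q := by exact_mod_cast mem_range.1 hi
  have hq : (0 : ℝ) < q := (Nat.cast_nonneg i).trans_lt hiq
  refine ⟨rfl, rfl, ?_, ?_⟩
  · simp only [unit, le_add_iff_nonneg_right]
    positivity
  · simp only [unit, add_lt_add_iff_left]
    exact (div_lt_one hq).2 hiq

theorem width_eq_one_of_mem_stack (hR : R ∈ stack l t q) : R.r - R.l = 1 := by
  obtain ⟨hl, hr, -⟩ := mem_stack hR
  rw [hl, hr]; ring

theorem filter_covers_stack {p : ℝ × ℝ} [DecidablePred (covers · p)]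
    (h₁ : l ≤ p.1) (h₂ : p.1 ≤ l + 1) (h₃ : p.2 ≤ t) :
    (stack l t q).filter (covers · p) = stack l t q :=
  filter_true_of_mem fun R hR => by
    obtain ⟨hl, hr, ht, -⟩ := mem_stack hR
    exact ⟨hl ▸ h₁, hr ▸ h₂, h₃.trans ht⟩

theorem filter_covers_stack_eq_empty {p : ℝ × ℝ} [DecidablePred (covers · p)]
    (h : p.1 < l ∨ l + 1 < p.1 ∨ t + 1 ≤ p.2) :
    (stack l t q).filter (covers · p) = ∅ :=
  filter_false_of_mem fun R hR ⟨h₁, h₂, h₃⟩ => by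
    obtain ⟨hl, hr, -, ht⟩ := mem_stack hR
    rcases h with h | h | h <;> linarith

theorem card_stack_union_stack {l' t' : ℝ} (h : l ≠ l') :
    #(stack l t q ∪ stack l' t' q) = 2 * q := by
  rw [card_union_of_disjoint, card_stack, card_stack, two_mul]
  exact disjoint_left.2 fun R hR hR' => h ((mem_stack hR).1.symm.trans (mem_stack hR').1)

end BRect

open BRect in
/-- Lower bound for unit-width bottomless rectangles:
`m_k^* ≥ 2⌊(2k-1)/3⌋ + 1`. There is a tower- and nested-pair-free family of unit-width
rectangles such that every `k`-colouring leaves a `2⌊(2k-1)/3⌋`-fold covered point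
missing some colour. -/
theorem unit_mk_lower_bound (k : ℕ) (hk : 1 ≤ k) :
    ∃ F : Finset BRect,
      (∀ R ∈ F, R.r - R.l = 1) ∧
      (∀ R ∈ F, ∀ R' ∈ F, ¬ TowerPair R R' ∧ ¬ NestedPair R R') ∧
      ∀ c : BRect → Fin k, ∃ p : ℝ × ℝ,
        (∃ G ⊆ F, 2 * ((2 * k - 1) / 3) ≤ G.card ∧ ∀ R ∈ G, R.covers p) ∧
        ∃ i : Fin k, ∀ R ∈ F, R.covers p → c R ≠ i := by
  classical
  set q := (2 * k - 1) / 3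
  set A := stack 0 2 q
  set B := stack (1 / 4) 1 q
  set C := stack (1 / 2) 3 q
  have hwidth : ∀ R ∈ A ∪ B ∪ C, R.r - R.l = 1 := by
    simp only [mem_union]
    rintro R ((hR | hR) | hR) <;> exact width_eq_one_of_mem_stack hR
  refine ⟨A ∪ B ∪ C, hwidth, fun R hR R' hR' => ?_, fun c => ?_⟩
  · have hRR' : R.r - R.l = R'.r - R'.l := by rw [hwidth R hR, hwidth R' hR']
    exact ⟨not_towerPair_of_width_eq hRR', not_nestedPair_of_width_eq hRR'⟩
  have hq : 3 * q < 2 * Fintype.card (Fin k) := by rw [Fintype.card_fin]; omega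
  rcases exists_notMem_image_union c (A := A) (B := B) (C := C) hq
    card_stack.le card_stack.le card_stack.le with ⟨i, hi⟩ | ⟨i, hi⟩ | ⟨i, hi⟩
  · refine ⟨(1 / 4, 0),
      exists_subset_card_le_and_colour_notMem ?_ (card_stack_union_stack ?_).ge hi⟩
    · rw [filter_union, filter_union, filter_covers_stack, filter_covers_stack,
        filter_covers_stack_eq_empty, union_empty] <;> norm_num
    · norm_num
  · refine ⟨(5 / 4, 0),
      exists_subset_card_le_and_colour_notMem ?_ (card_stack_union_stack ?_).ge hi⟩
    · rw [filter_union, filter_union, filter_covers_stack_eq_empty, filter_covers_stack,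
        filter_covers_stack, empty_union] <;> norm_num
    · norm_num
  · refine ⟨(1 / 2, 2),
      exists_subset_card_le_and_colour_notMem ?_ (card_stack_union_stack ?_).ge hi⟩
    · rw [filter_union, filter_union, filter_covers_stack, filter_covers_stack_eq_empty,
        filter_covers_stack, union_empty] <;> norm_num
    · norm_num
end
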